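/- arXiv:2507.04198 — 8 statements merged into one kernel-verified Lean document; each statement's English description precedes it below -/
import Mathlib

section
/- For every r > 0, ∫_D (y₁ y₂ / |y|⁴) dy ≤ 8, where D := ((0,2r) × (r/2,∞)) ∪ ((r/2,∞) × (0,2r)) ⊆ ℝ²; in particular ∫_{(0,2r) × (r/2,∞)} (y₁ / |y|³) dy ≤ 4. -/
/-!
On the strip `(0, 2r) × (r/2, ∞)` both integrands are dominated by `y₁ / y₂³`, because
`|y| ≥ y₂`, and by Tonelli this dominating function integrates to
`(∫₀^{2r} y₁ dy₁) (∫_{r/2}^∞ y₂⁻³ dy₂) = 2r² · 2/r² = 4`. The second strip is the mirror image of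
the first under `(y₁, y₂) ↦ (y₂, y₁)`, which preserves `y₁ y₂ / |y|⁴`, so subadditivity of the
(nonnegative) integral over a union gives `8`.
-/

open MeasureTheory Real Filter Set

noncomputable section

open scoped ENNReal

theorem setIntegral_le_of_setLIntegral_le {α : Type*} [MeasurableSpace α] {μ : Measure α}
    {f : α → ℝ} {s : Set α} {C : ℝ} (hs : MeasurableSet s)
    (hf : AEStronglyMeasurable f (μ.restrict s)) (hf_nonneg : ∀ x ∈ s, 0 ≤ f x) (hC : 0 ≤ C)
    (h : ∫⁻ x in s, ENNReal.ofReal (f x) ∂μ ≤ ENNReal.ofReal C) :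
    ∫ x in s, f x ∂μ ≤ C := by
  rw [integral_eq_lintegral_of_nonneg_ae (ae_restrict_of_forall_mem hs hf_nonneg) hf]
  exact ENNReal.toReal_le_of_le_ofReal hC h

theorem setLIntegral_prod_swap {α β : Type*} [MeasurableSpace α] [MeasurableSpace β]
    {μ : Measure α} {ν : Measure β} [SFinite μ] [SFinite ν]
    (s : Set α) (t : Set β) (f : α × β → ℝ≥0∞) :
    ∫⁻ z in t ×ˢ s, f z.swap ∂ν.prod μ = ∫⁻ z in s ×ˢ t, f z ∂μ.prod ν := by
  rw [← Measure.prod_restrict, ← Measure.prod_restrict, lintegral_prod_swap]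

theorem setLIntegral_prod_mul {α β : Type*} [MeasurableSpace α] [MeasurableSpace β]
    {μ : Measure α} {ν : Measure β} [SFinite μ] [SFinite ν] {s : Set α} {t : Set β} {f : α → ℝ≥0∞}
    {g : β → ℝ≥0∞} (hf : AEMeasurable f (μ.restrict s)) (hg : AEMeasurable g (ν.restrict t)) :
    ∫⁻ z in s ×ˢ t, f z.1 * g z.2 ∂μ.prod ν = (∫⁻ x in s, f x ∂μ) * ∫⁻ y in t, g y ∂ν := by
  rw [← Measure.prod_restrict, lintegral_prod_mul hf hg]

theorem lintegral_Ioo_zero_ofReal_id {b : ℝ} (hb : 0 ≤ b) :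
    ∫⁻ x in Ioo 0 b, ENNReal.ofReal x = ENNReal.ofReal (b ^ 2 / 2) := by
  have hint : IntegrableOn (fun x : ℝ => x) (Ioo 0 b) :=
    Iff.mp integrableOn_Ioc_iff_integrableOn_Ioo (intervalIntegral.intervalIntegrable_id (μ := volume) (a := 0) (b := b)).1
  rw [← ofReal_integral_eq_lintegral_ofReal hint
    (ae_restrict_of_forall_mem measurableSet_Ioo fun x hx => hx.1.le),
    ← integral_Ioc_eq_integral_Ioo, ← intervalIntegral.integral_of_le hb, integral_id]
  norm_num

theorem lintegral_Ioi_ofReal_inv_pow_three {a : ℝ} (ha : 0 < a) :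
    ∫⁻ y in Ioi a, ENNReal.ofReal (y ^ 3)⁻¹ = ENNReal.ofReal (2 * a ^ 2)⁻¹ := by
  have hrpow : EqOn (fun y : ℝ => y ^ (-3 : ℝ)) (fun y => (y ^ 3)⁻¹) (Ioi a) := fun y hy => by
    dsimp only
    rw [show (-3 : ℝ) = -(3 : ℕ) by norm_num, rpow_neg (ha.trans hy).le, rpow_natCast]
  have hint : IntegrableOn (fun y : ℝ => (y ^ 3)⁻¹) (Ioi a) :=
    (integrableOn_Ioi_rpow_of_lt (by norm_num) ha).congr_fun hrpow measurableSet_Ioi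
  rw [← ofReal_integral_eq_lintegral_ofReal hint
    (ae_restrict_of_forall_mem measurableSet_Ioi fun y hy => by
      have := ha.trans hy
      positivity),
    ← setIntegral_congr_fun measurableSet_Ioi hrpow, integral_Ioi_rpow_of_lt (by norm_num) ha,
    show (-3 : ℝ) + 1 = -(2 : ℕ) by norm_num, rpow_neg ha.le, rpow_natCast]
  congr 1
  field_simp
  norm_num

theorem lintegral_Ioo_prod_Ioi_div_pow_three {a b : ℝ} (ha : 0 < a) (hb : 0 ≤ b) :
    ∫⁻ p : ℝ × ℝ in Ioo 0 b ×ˢ Ioi a, ENNReal.ofReal (p.1 / p.2 ^ 3)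
      = ENNReal.ofReal (b ^ 2 / (4 * a ^ 2)) := by
  have hsplit : EqOn (fun p : ℝ × ℝ => ENNReal.ofReal (p.1 / p.2 ^ 3))
      (fun p => ENNReal.ofReal p.1 * ENNReal.ofReal (p.2 ^ 3)⁻¹) (Ioo 0 b ×ˢ Ioi a) :=
    fun p hp => by dsimp only; rw [div_eq_mul_inv, ENNReal.ofReal_mul hp.1.1.le]
  rw [setLIntegral_congr_fun (measurableSet_Ioo.prod measurableSet_Ioi) hsplit,
    Measure.volume_eq_prod, setLIntegral_prod_mul (f := ENNReal.ofReal) (g := fun y => ENNReal.ofReal (y ^ 3)⁻¹)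
      (by fun_prop) (by fun_prop),
    lintegral_Ioo_zero_ofReal_id hb, lintegral_Ioi_ofReal_inv_pow_three ha,
    ← ENNReal.ofReal_mul (by positivity)]
  congr 1
  field_simp
  ring

theorem mul_div_sq_add_sq_sq_le {x y : ℝ} (hx : 0 ≤ x) (hy : 0 < y) :
    x * y / (x ^ 2 + y ^ 2) ^ 2 ≤ x / y ^ 3 :=
  calc x * y / (x ^ 2 + y ^ 2) ^ 2 ≤ x * y / (y ^ 2) ^ 2 := by
        gcongr
        exact le_add_of_nonneg_left (sq_nonneg x)
    _ = x / y ^ 3 := by field_simp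

theorem div_sqrt_sq_add_sq_pow_three_le {x y : ℝ} (hx : 0 ≤ x) (hy : 0 < y) :
    x / √(x ^ 2 + y ^ 2) ^ 3 ≤ x / y ^ 3 := by
  gcongr
  exact (le_sqrt hy.le (by positivity)).mpr (le_add_of_nonneg_left (sq_nonneg x))

theorem setLIntegral_strip_le_four {r : ℝ} (hr : 0 < r) {f : ℝ × ℝ → ℝ}
    (hf : ∀ p : ℝ × ℝ, 0 < p.1 → 0 < p.2 → f p ≤ p.1 / p.2 ^ 3) :
    ∫⁻ p in Ioo 0 (2 * r) ×ˢ Ioi (r / 2), ENNReal.ofReal (f p) ≤ ENNReal.ofReal 4 := by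
  have hr2 : 0 < r / 2 := by positivity
  calc ∫⁻ p in Ioo 0 (2 * r) ×ˢ Ioi (r / 2), ENNReal.ofReal (f p)
      ≤ ∫⁻ p in Ioo 0 (2 * r) ×ˢ Ioi (r / 2), ENNReal.ofReal (p.1 / p.2 ^ 3) :=
        setLIntegral_mono' (measurableSet_Ioo.prod measurableSet_Ioi) fun p hp =>
          ENNReal.ofReal_le_ofReal (hf p hp.1.1 (hr2.trans hp.2))
    _ = ENNReal.ofReal 4 := by
        rw [lintegral_Ioo_prod_Ioi_div_pow_three hr2 (by positivity)]
        congr 1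
        field_simp
        ring

theorem statement5 (r : ℝ) (hr : 0 < r) :
    (∫ y in (Ioo (0 : ℝ) (2 * r) ×ˢ Ioi (r / 2)) ∪ (Ioi (r / 2) ×ˢ Ioo (0 : ℝ) (2 * r)),
        y.1 * y.2 / (y.1 ^ 2 + y.2 ^ 2) ^ 2) ≤ 8
    ∧ (∫ y in (Ioo (0 : ℝ) (2 * r) ×ˢ Ioi (r / 2)),
        y.1 / Real.sqrt (y.1 ^ 2 + y.2 ^ 2) ^ 3) ≤ 4 := by
  set A := Ioo (0 : ℝ) (2 * r) ×ˢ Ioi (r / 2)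
  set B := Ioi (r / 2) ×ˢ Ioo (0 : ℝ) (2 * r)
  have hA : MeasurableSet A := measurableSet_Ioo.prod measurableSet_Ioi
  have hpos : ∀ p ∈ A ∪ B, 0 < p.1 ∧ 0 < p.2 := by
    rintro p (⟨h1, h2⟩ | ⟨h1, h2⟩)
    exacts [⟨h1.1, by linarith [h2.out]⟩, ⟨by linarith [h1.out], h2.1⟩]
  have hswap : ∫⁻ p in B, ENNReal.ofReal (p.1 * p.2 / (p.1 ^ 2 + p.2 ^ 2) ^ 2)
      = ∫⁻ p in A, ENNReal.ofReal (p.1 * p.2 / (p.1 ^ 2 + p.2 ^ 2) ^ 2) := by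
    rw [Measure.volume_eq_prod, ← setLIntegral_prod_swap]
    exact lintegral_congr fun p => by rw [Prod.fst_swap, Prod.snd_swap, mul_comm, add_comm]
  constructor
  · refine setIntegral_le_of_setLIntegral_le (hA.union (measurableSet_Ioi.prod measurableSet_Ioo))
      (by fun_prop : Measurable _).aestronglyMeasurable (fun p hp => ?_) (by norm_num) ?_
    · obtain ⟨h1, h2⟩ := hpos p hp
      positivity
    calc _ ≤ _ := lintegral_union_le _ A B
      _ ≤ ENNReal.ofReal 4 + ENNReal.ofReal 4 := by
        have hA_le := setLIntegral_strip_le_four hr fun p h1 h2 => mul_div_sq_add_sq_sq_le h1.le h2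
        rw [hswap]
        exact add_le_add hA_le hA_le
      _ = ENNReal.ofReal 8 := by rw [← ENNReal.ofReal_add] <;> norm_num
  · refine setIntegral_le_of_setLIntegral_le hA (by fun_prop : Measurable _).aestronglyMeasurable
      (fun p hp => ?_) (by norm_num)
      (setLIntegral_strip_le_four hr fun p h1 h2 => div_sqrt_sq_add_sq_pow_three_le h1.le h2)
    have := (hpos p (Or.inl hp)).1
    positivity
end
end

section
/- Let ω ∈ (L^∞ ∩ L^1)(ℝ²) and let u be its Biot–Savart velocity. Then for every ε > 0, u₁(−ε,0) − u₁(ε,0) = (2ε/π) ∫_{ℝ²} ( y₁ y₂ / ( |(ε,0) − y|² |(−ε,0) − y|² ) ) ω(y) dy. -/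
open MeasureTheory Real Filter Set

noncomputable section

/-- The Biot–Savart velocity of a vorticity `ω ∈ (L^∞ ∩ L¹)(ℝ²)`:
`u(x) = (1/(2π)) ∫_{ℝ²} ((x₂ − y₂, y₁ − x₁)/|x − y|²) ω(y) dy`. -/
def biotSavart (ω : ℝ × ℝ → ℝ) (x : ℝ × ℝ) : ℝ × ℝ :=
  ((1 / (2 * π)) * ∫ y : ℝ × ℝ, ((x.2 - y.2) / ((x.1 - y.1) ^ 2 + (x.2 - y.2) ^ 2)) * ω y,
   (1 / (2 * π)) * ∫ y : ℝ × ℝ, ((y.1 - x.1) / ((x.1 - y.1) ^ 2 + (x.2 - y.2) ^ 2)) * ω y)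

/-! The difference of the two velocities is the integral of `ω` against the difference of the two
translated kernels `z ↦ z₂ / |z|²`, and that difference is the displayed kernel by an algebraic
identity (both vanish where `y₂ = 0`). The only analysis is the convergence of each Biot–Savart
integral: the kernel is bounded by `|z|⁻¹`, so it is integrable near `0` in the plane and bounded
away from `0`, and its product with `ω ∈ L¹ ∩ L^∞` is therefore integrable. -/

section

variable {E : Type*} [NormedAddCommGroup E] [NormedSpace ℝ E] [FiniteDimensional ℝ E]
  [MeasurableSpace E] [BorelSpace E] {μ : Measure E} [μ.IsAddHaarMeasure]

theorem integrable_comp_sub_mul_of_norm_le_rpow {K ω : E → ℝ} {α : ℝ}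
    (hα₀ : 0 ≤ α) (hα : α < Module.finrank ℝ E) (hK : ∀ z, ‖K z‖ ≤ ‖z‖ ^ (-α))
    (hKm : Measurable K) (hω₁ : Integrable ω μ) (hω_top : MemLp ω ⊤ μ) (x : E) :
    Integrable (fun y => K (x - y) * ω y) μ := by
  set B := Metric.ball (0 : E) 1
  have hd : 1 ≤ Module.finrank ℝ E := by exact_mod_cast (hα₀.trans_lt hα)
  have h_near : Integrable (B.indicator K) μ :=
    (integrable_indicator_iff measurableSet_ball).2 <| integrableOn_ball_of_norm_le_rpow hd hα
      (ae_of_all _ fun z => (hK z).trans_eq (one_mul _).symm) hKm.aestronglyMeasurable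
  have h_far : ∀ z, ‖Bᶜ.indicator K z‖ ≤ 1 := by
    intro z
    by_cases hz : z ∈ B
    · simp [hz]
    · rw [indicator_of_mem hz]
      have : 1 ≤ ‖z‖ := by simpa [B] using hz
      exact (hK z).trans (rpow_le_one_of_one_le_of_nonpos this (neg_nonpos.2 hα₀))
  have h_far_meas : Measurable (Bᶜ.indicator K) := hKm.indicator measurableSet_ball.compl
  have h_split := ((h_near.comp_sub_left x).mul_of_top_left hω_top).add
    (hω₁.bdd_mul (h_far_meas.comp (measurable_id.const_sub x)).aestronglyMeasurable
      (ae_of_all _ fun y => h_far (x - y)))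
  refine h_split.congr (ae_of_all _ fun y => ?_)
  simp only [Pi.add_apply, Pi.mul_apply, Function.comp_apply, id, ← add_mul,
    indicator_self_add_compl_apply]

end

def biotSavartKernelFst (z : ℝ × ℝ) : ℝ := z.2 / (z.1 ^ 2 + z.2 ^ 2)

theorem biotSavart_fst (ω : ℝ × ℝ → ℝ) (x : ℝ × ℝ) :
    (biotSavart ω x).1 = 1 / (2 * π) * ∫ y, biotSavartKernelFst (x - y) * ω y :=
  rfl

theorem measurable_biotSavartKernelFst : Measurable biotSavartKernelFst := by
  unfold biotSavartKernelFst; fun_prop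

theorem norm_biotSavartKernelFst_le (z : ℝ × ℝ) :
    ‖biotSavartKernelFst z‖ ≤ ‖z‖ ^ (-1 : ℝ) := by
  rcases eq_or_ne z 0 with rfl | hz
  · simp [biotSavartKernelFst]
  have hpos : 0 < ‖z‖ := norm_pos_iff.2 hz
  have hsq : ‖z‖ ^ 2 ≤ z.1 ^ 2 + z.2 ^ 2 := by
    rw [Prod.norm_def, Real.norm_eq_abs, Real.norm_eq_abs]
    rcases max_cases |z.1| |z.2| with ⟨h, -⟩ | ⟨h, -⟩ <;> rw [h, sq_abs] <;> nlinarith [sq_nonneg z.1, sq_nonneg z.2]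
  have h2 : |z.2| ≤ ‖z‖ := by simpa using norm_snd_le z
  have hS : 0 < z.1 ^ 2 + z.2 ^ 2 := (pow_pos hpos 2).trans_le hsq
  calc ‖biotSavartKernelFst z‖ = |z.2| / (z.1 ^ 2 + z.2 ^ 2) := by
        rw [Real.norm_eq_abs, biotSavartKernelFst, abs_div, abs_of_pos hS]
    _ ≤ ‖z‖ / ‖z‖ ^ 2 := div_le_div₀ hpos.le h2 (by positivity) hsq
    _ = ‖z‖ ^ (-1 : ℝ) := by rw [rpow_neg_one]; field_simp

theorem biotSavartKernelFst_sub_sub (ε : ℝ) (y : ℝ × ℝ) :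
    biotSavartKernelFst ((-ε, 0) - y) - biotSavartKernelFst ((ε, 0) - y) =
      4 * ε * (y.1 * y.2 / (((ε - y.1) ^ 2 + y.2 ^ 2) * ((ε + y.1) ^ 2 + y.2 ^ 2))) := by
  rcases eq_or_ne y.2 0 with h | h
  · simp [biotSavartKernelFst, h]
  have hA : (ε + y.1) ^ 2 + y.2 ^ 2 ≠ 0 := by positivity
  have hB : (ε - y.1) ^ 2 + y.2 ^ 2 ≠ 0 := by positivity
  simp only [biotSavartKernelFst, Prod.fst_sub, Prod.snd_sub]
  field_simp
  ring

theorem statement6_general (ω : ℝ × ℝ → ℝ)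
    (hbdd : MemLp ω ⊤ (volume : Measure (ℝ × ℝ)))
    (hint : Integrable ω (volume : Measure (ℝ × ℝ)))
    (ε : ℝ) :
    (biotSavart ω (-ε, 0)).1 - (biotSavart ω (ε, 0)).1 =
      (2 * ε / π) * ∫ y : ℝ × ℝ,
        (y.1 * y.2 / (((ε - y.1) ^ 2 + y.2 ^ 2) * ((ε + y.1) ^ 2 + y.2 ^ 2))) * ω y := by
  have h_int (x : ℝ × ℝ) : Integrable (fun y => biotSavartKernelFst (x - y) * ω y) :=
    integrable_comp_sub_mul_of_norm_le_rpow zero_le_one (by simp) norm_biotSavartKernelFst_le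
      measurable_biotSavartKernelFst hint hbdd x
  rw [biotSavart_fst, biotSavart_fst, ← mul_sub, ← integral_sub (h_int _) (h_int _)]
  simp_rw [← sub_mul, biotSavartKernelFst_sub_sub, mul_assoc, integral_const_mul]
  field_simp
  ring

theorem statement6 (ω : ℝ × ℝ → ℝ)
    (hbdd : MemLp ω ⊤ (volume : Measure (ℝ × ℝ)))
    (hint : Integrable ω (volume : Measure (ℝ × ℝ)))
    (ε : ℝ) (hε : 0 < ε) :
    (biotSavart ω (-ε, 0)).1 - (biotSavart ω (ε, 0)).1 =
      (2 * ε / π) * ∫ y : ℝ × ℝ,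
        (y.1 * y.2 / (((ε - y.1) ^ 2 + y.2 ^ 2) * ((ε + y.1) ^ 2 + y.2 ^ 2))) * ω y :=
  statement6_general ω hbdd hint ε

end
end

section
/- For every I ≥ 1 there exists ε_I > 0 such that for all ε ∈ (0, ε_I] and all a > 0: if the set L := { y ∈ ℝ² : |y₁ y₂| / ( |(ε,0) − y|² |(−ε,0) − y|² ) ≥ a } has Lebesgue measure equal to I, then L ⊆ B_{10√I}(0). -/
open MeasureTheory Real Filter Set

noncomputable section

/-- The super-level set `L_ε(a) := { y ∈ ℝ² : |y₁y₂| / (|(ε,0) − y|² |(−ε,0) − y|²) ≥ a }`. -/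
def levelSet (ε a : ℝ) : Set (ℝ × ℝ) :=
  {y : ℝ × ℝ | a ≤ |y.1 * y.2| / (((ε - y.1) ^ 2 + y.2 ^ 2) * ((ε + y.1) ^ 2 + y.2 ^ 2))}

/-- The open Euclidean ball `B_r(0) ⊆ ℝ²`. -/
def ball2 (r : ℝ) : Set (ℝ × ℝ) :=
  {y : ℝ × ℝ | Real.sqrt (y.1 ^ 2 + y.2 ^ 2) < r}

set_option maxHeartbeats 1000000 in
theorem statement8 (I : ℝ) (hI : 1 ≤ I) :
    ∃ εI : ℝ, 0 < εI ∧
      ∀ ε : ℝ, 0 < ε → ε ≤ εI →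
        ∀ a : ℝ, 0 < a →
          volume (levelSet ε a) = ENNReal.ofReal I →
            levelSet ε a ⊆ ball2 (10 * Real.sqrt I) := by
  refine ⟨1, one_pos, ?_⟩
  intro ε hε hε1 a ha hvol
  have hI0 : (0:ℝ) < I := lt_of_lt_of_le one_pos hI
  -- Step 1 : 1 ≤ 169 * a * I
  have ha169 : 1 ≤ 169 * a * I := by
    by_cases hcase : ε ^ 2 ≤ 1 / (169 * a)
    · set r := Real.sqrt (1 / (169 * a)) with hrdef
      have hr2 : r ^ 2 = 1 / (169 * a) := Real.sq_sqrt (by positivity)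
      have hrpos : 0 < r := Real.sqrt_pos.mpr (by positivity)
      have hεr : ε ≤ r := by
        have h := Real.sqrt_le_sqrt hcase
        rwa [Real.sqrt_sq hε.le] at h
      have hkey : 169 * a * r ^ 2 = 1 := by
        rw [hr2]; field_simp
      have hsub : Set.Icc r (2*r) ×ˢ Set.Icc r (2*r) ⊆ levelSet ε a := by
        rintro ⟨y1, y2⟩ ⟨⟨h11, h12⟩, h21, h22⟩
        simp only [levelSet, Set.mem_setOf_eq]
        have hy1 : 0 < y1 := lt_of_lt_of_le hrpos h11
        have hy2 : 0 < y2 := lt_of_lt_of_le hrpos h21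
        have habs : |y1 * y2| = y1 * y2 := abs_of_pos (by positivity)
        have hD1 : (ε - y1) ^ 2 + y2 ^ 2 ≤ 8 * r ^ 2 := by nlinarith
        have hD2 : (ε + y1) ^ 2 + y2 ^ 2 ≤ 13 * r ^ 2 := by nlinarith
        have hD1p : (0:ℝ) < (ε - y1) ^ 2 + y2 ^ 2 := by positivity
        have hD2p : (0:ℝ) < (ε + y1) ^ 2 + y2 ^ 2 := by positivity
        rw [habs, le_div_iff₀ (by positivity)]
        have hprod : ((ε - y1) ^ 2 + y2 ^ 2) * ((ε + y1) ^ 2 + y2 ^ 2)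
            ≤ 104 * r ^ 2 * r ^ 2 := by nlinarith [mul_le_mul hD1 hD2 hD2p.le (by positivity : (0:ℝ) ≤ 8 * r ^ 2)]
        have hr2y : r ^ 2 ≤ y1 * y2 := by nlinarith
        nlinarith [mul_le_mul_of_nonneg_left hprod ha.le]
      have hmeas : ENNReal.ofReal r * ENNReal.ofReal r ≤ ENNReal.ofReal I := by
        calc ENNReal.ofReal r * ENNReal.ofReal r
            = volume (Set.Icc r (2*r) ×ˢ Set.Icc r (2*r)) := by
              rw [Measure.volume_eq_prod, Measure.prod_prod, Real.volume_Icc]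
              norm_num [two_mul]
          _ ≤ volume (levelSet ε a) := measure_mono hsub
          _ = ENNReal.ofReal I := hvol
      have hrI : r * r ≤ I := by
        rw [← ENNReal.ofReal_mul hrpos.le] at hmeas
        exact (ENNReal.ofReal_le_ofReal_iff hI0.le).mp hmeas
      nlinarith
    · push_neg at hcase
      have h1 : 1 < 169 * a * ε ^ 2 := by
        rw [div_lt_iff₀ (by positivity)] at hcase
        nlinarith
      nlinarith [sq_nonneg ε, hε1, hε.le]
  -- Step 2 : containment
  rintro ⟨y1, y2⟩ hy
  simp only [levelSet, Set.mem_setOf_eq] at hy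
  simp only [ball2, Set.mem_setOf_eq]
  have hs100 : (y1 ^ 2 + y2 ^ 2) < 100 * I := by
    by_contra hcon
    push_neg at hcon
    have hε2 : ε ^ 2 ≤ 1 := by nlinarith
    have hsε : ε ^ 2 < (y1 ^ 2 + y2 ^ 2) := by nlinarith
    have hDlb : ((y1 ^ 2 + y2 ^ 2) - ε ^ 2) ^ 2 ≤ ((ε - y1) ^ 2 + y2 ^ 2) * ((ε + y1) ^ 2 + y2 ^ 2) := by
      have hid : ((ε - y1) ^ 2 + y2 ^ 2) * ((ε + y1) ^ 2 + y2 ^ 2)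
          = ((y1 ^ 2 + y2 ^ 2) - ε ^ 2) ^ 2 + 4 * (ε * y2) ^ 2 := by ring
      nlinarith [sq_nonneg (ε * y2)]
    have hDpos : (0:ℝ) < ((ε - y1) ^ 2 + y2 ^ 2) * ((ε + y1) ^ 2 + y2 ^ 2) := by
      nlinarith [sq_nonneg ((y1 ^ 2 + y2 ^ 2) - ε ^ 2)]
    have hN : |y1 * y2| ≤ (y1 ^ 2 + y2 ^ 2) / 2 := by
      rw [abs_le]
      constructor <;> nlinarith [sq_nonneg (y1 + y2), sq_nonneg (y1 - y2)]
    rw [le_div_iff₀ hDpos] at hy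
    have h1 : a * ((y1 ^ 2 + y2 ^ 2) - ε ^ 2) ^ 2 ≤ (y1 ^ 2 + y2 ^ 2) / 2 := by
      calc a * ((y1 ^ 2 + y2 ^ 2) - ε ^ 2) ^ 2 ≤ a * (((ε - y1) ^ 2 + y2 ^ 2) * ((ε + y1) ^ 2 + y2 ^ 2)) :=
            mul_le_mul_of_nonneg_left hDlb ha.le
        _ ≤ |y1 * y2| := hy
        _ ≤ (y1 ^ 2 + y2 ^ 2) / 2 := hN
    -- a ≥ 1/(169 I), (y1 ^ 2 + y2 ^ 2) ≥ 100 I, ε² ≤ I ⇒ contradiction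
    have hε2I : ε ^ 2 ≤ I := le_trans hε2 hI
    nlinarith [mul_pos ha hI0, sq_nonneg ((y1 ^ 2 + y2 ^ 2) - ε ^ 2), mul_le_mul_of_nonneg_left h1 (le_of_lt hI0),
      mul_pos hI0 hI0]
  have hsnn : (0:ℝ) ≤ (y1 ^ 2 + y2 ^ 2) := by positivity
  have : Real.sqrt (y1 ^ 2 + y2 ^ 2) < Real.sqrt (100 * I) := Real.sqrt_lt_sqrt hsnn hs100
  rwa [show (100:ℝ) * I = 10 ^ 2 * I by ring, Real.sqrt_mul (by norm_num) I,
    Real.sqrt_sq (by norm_num)] at this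
end
end

section
/- For every I ≥ 1 there exist constants C_I > 0 and ε_I > 0 such that for every ε ∈ (0, ε_I] and every ω ∈ (L^∞ ∩ L^1)(ℝ²) with |ω| ≤ 1 a.e. and ‖ω‖_{L¹} ≤ I, the Biot–Savart velocity u of ω satisfies u₁(−ε,0) − u₁(ε,0) ≤ (4/π) ε |ln ε| + C_I ε. -/
open MeasureTheory Real Filter Set

noncomputable section

/-!
Up to the factor `1 / (2π)`, `u₁(-ε, 0) - u₁(ε, 0)` is `∫ K_ε ω` with
`K_ε(y) = 4ε y₁ y₂ / (|y - (ε, 0)|² |y + (ε, 0)|²)`. Outside the disc of radius `2`, `|K_ε| ≤ ε`,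
which contributes `ε ‖ω‖₁`. Inside, `|K_ε|` has an integrable majorant independent of `ω`:
`8 (|y₁ - ε|^(-1/2) + |y₁ + ε|^(-1/2)) |y₂|^(-1/2)` on the square `|y₁|, |y₂| ≤ 2ε` and
`8ε |y₁| / |y₂|³` on the strip `|y₁| ≤ 2ε < |y₂| ≤ 2`, both of mass `O(ε)`, and
`4ε |y₁ y₂| / (|y|² - ε²)²` on the band `2ε < |y₁| ≤ 2, |y₂| ≤ 2`. Integrating first in `y₂`, the
band carries mass `4ε log ((4 - ε²) / (3ε²)) = 8ε |log ε| + O(ε)`, the source of `(4/π) ε |log ε|`.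
-/

def symmIoc (a b : ℝ) : Set ℝ := Ioc a b ∪ Ioc (-b) (-a)

theorem measurableSet_symmIoc (a b : ℝ) : MeasurableSet (symmIoc a b) :=
  measurableSet_Ioc.union measurableSet_Ioc

theorem abs_mem_Icc_of_mem_symmIoc {a b x : ℝ} (ha : 0 ≤ a) (hx : x ∈ symmIoc a b) :
    a ≤ |x| ∧ |x| ≤ b := by
  rcases hx with ⟨h₁, h₂⟩ | ⟨h₁, h₂⟩
  · rw [abs_of_pos (ha.trans_lt h₁)]; exact ⟨h₁.le, h₂⟩
  · rw [abs_of_nonpos (by linarith)]; constructor <;> linarith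

theorem symmIoc_subset_Icc {a b : ℝ} (ha : 0 ≤ a) : symmIoc a b ⊆ Icc (-b) b :=
  fun _ hx ↦ abs_le.mp (abs_mem_Icc_of_mem_symmIoc ha hx).2

theorem mem_Icc_or_mem_symmIoc_or_lt_abs {a b t : ℝ} (ht : t ≠ -b) :
    t ∈ Icc (-a) a ∨ t ∈ symmIoc a b ∨ b < |t| := by
  rcases le_or_gt |t| a with hta | hta
  · exact Or.inl (abs_le.mp hta)
  rcases le_or_gt |t| b with htb | htb
  · refine Or.inr (Or.inl ?_)
    rcases le_or_gt t 0 with ht₀ | ht₀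
    · rw [abs_of_nonpos ht₀] at hta htb
      exact Or.inr ⟨lt_of_le_of_ne (by linarith) ht.symm, by linarith⟩
    · rw [abs_of_pos ht₀] at hta htb
      exact Or.inl ⟨hta, htb⟩
  · exact Or.inr (Or.inr htb)

section EvenFunction

variable {E : Type*} [NormedAddCommGroup E] {f : ℝ → E} {a b : ℝ}

theorem Function.Even.intervalIntegrable_neg (hf : f.Even)
    (h : IntervalIntegrable f volume a b) : IntervalIntegrable f volume (-b) (-a) := by
  simpa only [hf _] using ((IntervalIntegrable.iff_comp_neg).mp h).symm

theorem Function.Even.integrableOn_symmIoc (hf : f.Even) (hab : a ≤ b)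
    (h : IntervalIntegrable f volume a b) : IntegrableOn f (symmIoc a b) :=
  ((intervalIntegrable_iff_integrableOn_Ioc_of_le hab).mp h).union
    ((intervalIntegrable_iff_integrableOn_Ioc_of_le (neg_le_neg hab)).mp
      (hf.intervalIntegrable_neg h))

variable [NormedSpace ℝ E]

theorem Function.Even.integral_neg (hf : f.Even) :
    ∫ x in -b..-a, f x = ∫ x in a..b, f x := by
  rw [← intervalIntegral.integral_comp_neg]
  exact intervalIntegral.integral_congr fun x _ ↦ hf x

theorem Function.Even.integral_neg_self (hf : f.Even) (h : IntervalIntegrable f volume 0 b) :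
    ∫ x in -b..b, f x = (2 : ℝ) • ∫ x in (0 : ℝ)..b, f x := by
  rw [← intervalIntegral.integral_add_adjacent_intervals
      (by simpa using hf.intervalIntegrable_neg h) h,
    ← neg_zero, hf.integral_neg, neg_zero, two_smul]

theorem Function.Even.integral_symmIoc (hf : f.Even) (ha : 0 ≤ a) (hab : a ≤ b)
    (h : IntervalIntegrable f volume a b) :
    ∫ x in symmIoc a b, f x = (2 : ℝ) • ∫ x in a..b, f x := by
  have hdisj : Disjoint (Ioc a b) (Ioc (-b) (-a)) :=
    Set.disjoint_left.mpr fun x hx hx' ↦ by linarith [hx.1, hx'.2]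
  rw [symmIoc, setIntegral_union hdisj measurableSet_Ioc
      ((intervalIntegrable_iff_integrableOn_Ioc_of_le hab).mp h)
      ((intervalIntegrable_iff_integrableOn_Ioc_of_le (neg_le_neg hab)).mp
        (hf.intervalIntegrable_neg h)),
    ← intervalIntegral.integral_of_le hab, ← intervalIntegral.integral_of_le (neg_le_neg hab),
    hf.integral_neg, two_smul]

end EvenFunction

theorem integral_indicator_Icc {f : ℝ → ℝ} {a b : ℝ} (hab : a ≤ b) :
    ∫ x, (Icc a b).indicator f x = ∫ x in a..b, f x := by
  rw [integral_indicator measurableSet_Icc, integral_Icc_eq_integral_Ioc,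
    intervalIntegral.integral_of_le hab]

theorem IntervalIntegrable.integrable_indicator_Icc {f : ℝ → ℝ} {a b : ℝ} (hab : a ≤ b)
    (h : IntervalIntegrable f volume a b) : Integrable ((Icc a b).indicator f) :=
  ((intervalIntegrable_iff_integrableOn_Icc_of_le hab).mp h).integrable_indicator measurableSet_Icc

theorem ae_fst_ne (c : ℝ) : ∀ᵐ y : ℝ × ℝ, y.1 ≠ c :=
  Measure.quasiMeasurePreserving_fst.ae (volume.ae_ne c)

theorem ae_snd_ne (c : ℝ) : ∀ᵐ y : ℝ × ℝ, y.2 ≠ c :=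
  Measure.quasiMeasurePreserving_snd.ae (volume.ae_ne c)

theorem abs_mul_le_add_mul_abs {k g w c : ℝ} (hg : 0 ≤ g) (hw : |w| ≤ 1) (hk : |k| ≤ g + c) :
    |k * w| ≤ g + c * |w| := by
  rw [abs_mul]
  nlinarith [abs_nonneg k, abs_nonneg w]

section MulBound

variable {α : Type*} [MeasurableSpace α] {μ : Measure α} {k g ω : α → ℝ} {c : ℝ}

theorem integrable_mul_of_abs_le_add (hk : AEStronglyMeasurable k μ) (hg : Integrable g μ)
    (hg₀ : 0 ≤ g) (hω : Integrable ω μ) (hω₁ : ∀ᵐ y ∂μ, |ω y| ≤ 1)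
    (hkg : ∀ᵐ y ∂μ, |k y| ≤ g y + c) : Integrable (fun y ↦ k y * ω y) μ := by
  refine (hg.add (hω.abs.const_mul c)).mono' (hk.mul hω.aestronglyMeasurable) ?_
  filter_upwards [hω₁, hkg] with y hωy hky
  exact abs_mul_le_add_mul_abs (hg₀ y) hωy hky

theorem integral_mul_le_of_abs_le_add (hk : AEStronglyMeasurable k μ) (hg : Integrable g μ)
    (hg₀ : 0 ≤ g) (hω : Integrable ω μ) (hω₁ : ∀ᵐ y ∂μ, |ω y| ≤ 1)
    (hkg : ∀ᵐ y ∂μ, |k y| ≤ g y + c) :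
    ∫ y, k y * ω y ∂μ ≤ ∫ y, g y ∂μ + c * ∫ y, |ω y| ∂μ := by
  rw [← integral_const_mul, ← integral_add hg (hω.abs.const_mul c)]
  refine integral_mono_ae (integrable_mul_of_abs_le_add hk hg hg₀ hω hω₁ hkg)
    (hg.add (hω.abs.const_mul c)) ?_
  filter_upwards [hω₁, hkg] with y hωy hky
  exact (le_abs_self _).trans (abs_mul_le_add_mul_abs (hg₀ y) hωy hky)

end MulBound

/-- `|x| ^ (-1/2)`; note the junk value `invSqrtAbs 0 = 0`. -/
def invSqrtAbs (x : ℝ) : ℝ := (√|x|)⁻¹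

theorem invSqrtAbs_nonneg (x : ℝ) : 0 ≤ invSqrtAbs x := by
  unfold invSqrtAbs; positivity

theorem invSqrtAbs_even : invSqrtAbs.Even := fun x ↦ by simp [invSqrtAbs]

theorem invSqrtAbs_eq_rpow {x : ℝ} (hx : 0 ≤ x) : invSqrtAbs x = x ^ (-(1 / 2 : ℝ)) := by
  rw [invSqrtAbs, abs_of_nonneg hx, rpow_neg hx, sqrt_eq_rpow]

theorem invSqrtAbs_mul_invSqrtAbs (a b : ℝ) :
    invSqrtAbs a * invSqrtAbs b = (√(|a| * |b|))⁻¹ := by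
  rw [invSqrtAbs, invSqrtAbs, sqrt_mul (abs_nonneg a), mul_inv]

theorem intervalIntegrable_invSqrtAbs_of_nonneg {b : ℝ} (hb : 0 ≤ b) :
    IntervalIntegrable invSqrtAbs volume 0 b := by
  refine (intervalIntegral.intervalIntegrable_rpow' (r := -(1 / 2)) (by norm_num)).congr ?_
  intro x hx
  rw [uIoc_of_le hb] at hx
  exact (invSqrtAbs_eq_rpow hx.1.le).symm

theorem intervalIntegrable_invSqrtAbs (a b : ℝ) : IntervalIntegrable invSqrtAbs volume a b := by
  have key : ∀ c, IntervalIntegrable invSqrtAbs volume 0 c := fun c ↦ by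
    rcases le_total 0 c with hc | hc
    · exact intervalIntegrable_invSqrtAbs_of_nonneg hc
    · simpa using (invSqrtAbs_even.intervalIntegrable_neg
        (intervalIntegrable_invSqrtAbs_of_nonneg (neg_nonneg.mpr hc))).symm
  exact (key a).symm.trans (key b)

theorem intervalIntegrable_invSqrtAbs_sub (c a b : ℝ) :
    IntervalIntegrable (fun x ↦ invSqrtAbs (x - c)) volume a b := by
  simpa using (intervalIntegrable_invSqrtAbs (a - c) (b - c)).comp_sub_right c

theorem intervalIntegrable_invSqrtAbs_add (c a b : ℝ) :
    IntervalIntegrable (fun x ↦ invSqrtAbs (x + c)) volume a b := by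
  simpa using (intervalIntegrable_invSqrtAbs (a + c) (b + c)).comp_add_right c

theorem integral_invSqrtAbs_of_nonneg {b : ℝ} (hb : 0 ≤ b) :
    ∫ x in (0 : ℝ)..b, invSqrtAbs x = 2 * √b := by
  rw [intervalIntegral.integral_congr (g := fun x ↦ x ^ (-(1 / 2 : ℝ))) fun x hx ↦
      invSqrtAbs_eq_rpow (uIcc_of_le hb ▸ hx).1,
    integral_rpow (Or.inl (by norm_num)), zero_rpow (by norm_num), sqrt_eq_rpow]
  norm_num
  ring

theorem integral_invSqrtAbs {a b : ℝ} (ha : 0 ≤ a) (hb : 0 ≤ b) :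
    ∫ x in -a..b, invSqrtAbs x = 2 * √a + 2 * √b := by
  rw [← intervalIntegral.integral_add_adjacent_intervals (intervalIntegrable_invSqrtAbs _ 0)
      (intervalIntegrable_invSqrtAbs 0 b), ← neg_zero, invSqrtAbs_even.integral_neg, neg_zero,
    integral_invSqrtAbs_of_nonneg ha, integral_invSqrtAbs_of_nonneg hb]

theorem integral_invSqrtAbs_sub {a b c : ℝ} (hac : a ≤ c) (hcb : c ≤ b) :
    ∫ x in a..b, invSqrtAbs (x - c) = 2 * √(c - a) + 2 * √(b - c) := by
  rw [intervalIntegral.integral_comp_sub_right, show a - c = -(c - a) by ring]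
  exact integral_invSqrtAbs (by linarith) (by linarith)

theorem integrable_indicator_invSqrtAbs_sub (a b c : ℝ) :
    Integrable ((Icc a b).indicator fun x ↦ invSqrtAbs (x - c)) := by
  rcases le_or_gt a b with hab | hab
  · exact (intervalIntegrable_invSqrtAbs_sub c a b).integrable_indicator_Icc hab
  · simp [Icc_eq_empty_of_lt hab]

theorem abs_div_sq_add_sq_le {d₁ d₂ : ℝ} (h₁ : d₁ ≠ 0) (h₂ : d₂ ≠ 0) :
    |d₂ / (d₁ ^ 2 + d₂ ^ 2)| ≤ invSqrtAbs d₁ * invSqrtAbs d₂ := by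
  have hQ : 0 < d₁ ^ 2 + d₂ ^ 2 := by positivity
  have hprod : 0 < |d₁| * |d₂| := by positivity
  rw [abs_div, abs_of_pos hQ, invSqrtAbs_mul_invSqrtAbs, div_le_iff₀ hQ, inv_mul_eq_div,
    le_div_iff₀ (sqrt_pos.mpr hprod)]
  have amgm : √(|d₁| * |d₂|) ≤ (|d₁| + |d₂|) / 2 :=
    sqrt_le_iff.mpr ⟨by positivity, by nlinarith [sq_nonneg (|d₁| - |d₂|)]⟩
  calc |d₂| * √(|d₁| * |d₂|) ≤ |d₂| * ((|d₁| + |d₂|) / 2) := by gcongr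
    _ ≤ d₁ ^ 2 + d₂ ^ 2 := by nlinarith [sq_abs d₁, sq_abs d₂, sq_nonneg (|d₁| - |d₂|)]

theorem abs_div_sq_add_sq_le_one {d₁ d₂ : ℝ} (h : 1 ≤ d₁ ^ 2 + d₂ ^ 2) :
    |d₂ / (d₁ ^ 2 + d₂ ^ 2)| ≤ 1 := by
  have hQ : 0 < d₁ ^ 2 + d₂ ^ 2 := by linarith
  rw [abs_div, abs_of_pos hQ, div_le_one hQ]
  nlinarith [sq_nonneg (|d₂| - 1), sq_abs d₂]

/-- `2π` times the kernel of `ω ↦ u₁(-ε, 0) - u₁(ε, 0)`. -/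
def gapKernel (ε : ℝ) (z : ℝ × ℝ) : ℝ :=
  4 * ε * z.1 * z.2 / (((z.1 - ε) ^ 2 + z.2 ^ 2) * ((z.1 + ε) ^ 2 + z.2 ^ 2))

theorem measurable_gapKernel (ε : ℝ) : Measurable (gapKernel ε) := by
  unfold gapKernel
  exact Measurable.div (by fun_prop) (by fun_prop)

section GapKernelBounds

variable {ε x y : ℝ}

theorem gapKernel_neg_fst : gapKernel ε (-x, y) = -gapKernel ε (x, y) := by
  simp only [gapKernel]
  rw [show (-x - ε) ^ 2 = (x + ε) ^ 2 by ring, show (-x + ε) ^ 2 = (x - ε) ^ 2 by ring]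
  ring

theorem sq_add_sq_sub_sq_sq_le :
    (x ^ 2 + y ^ 2 - ε ^ 2) ^ 2 ≤ ((x - ε) ^ 2 + y ^ 2) * ((x + ε) ^ 2 + y ^ 2) := by
  nlinarith [sq_nonneg (ε * y)]

theorem abs_gapKernel_le_of_le {c : ℝ} (hε : 0 ≤ ε) (hc : 0 < c) (hcr : c ≤ x ^ 2 + y ^ 2 - ε ^ 2) :
    |gapKernel ε (x, y)| ≤ 4 * ε * (|x| * |y|) / c ^ 2 := by
  have hc2 : c ^ 2 ≤ ((x - ε) ^ 2 + y ^ 2) * ((x + ε) ^ 2 + y ^ 2) :=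
    (pow_le_pow_left₀ hc.le hcr 2).trans sq_add_sq_sub_sq_sq_le
  simp only [gapKernel]
  rw [abs_div, abs_of_pos ((pow_pos hc 2).trans_le hc2), abs_mul, abs_mul, abs_mul,
    abs_of_nonneg hε, abs_of_pos four_pos, mul_assoc (4 * ε)]
  exact div_le_div_of_nonneg_left (by positivity) (by positivity) hc2

theorem abs_gapKernel_le_near_of_nonneg (hε : 0 < ε) (hx₀ : 0 ≤ x) (hx : x ≤ 2 * ε)
    (hxε : x ≠ ε) (hy : y ≠ 0) :
    |gapKernel ε (x, y)| ≤ 8 * invSqrtAbs (x - ε) * invSqrtAbs y := by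
  have hB : ε ^ 2 ≤ (x + ε) ^ 2 + y ^ 2 := by nlinarith [sq_nonneg y]
  have hfactor : |4 * ε * x / ((x + ε) ^ 2 + y ^ 2)| ≤ 8 := by
    rw [abs_of_nonneg (by positivity), div_le_iff₀ (by positivity)]
    nlinarith
  have hsplit : gapKernel ε (x, y) =
      y / ((x - ε) ^ 2 + y ^ 2) * (4 * ε * x / ((x + ε) ^ 2 + y ^ 2)) := by
    rw [gapKernel, div_mul_div_comm]; ring
  calc |gapKernel ε (x, y)|
      = |y / ((x - ε) ^ 2 + y ^ 2)| * |4 * ε * x / ((x + ε) ^ 2 + y ^ 2)| := by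
        rw [hsplit, abs_mul]
    _ ≤ invSqrtAbs (x - ε) * invSqrtAbs y * 8 :=
        mul_le_mul (abs_div_sq_add_sq_le (sub_ne_zero.mpr hxε) hy) hfactor (abs_nonneg _)
          (mul_nonneg (invSqrtAbs_nonneg _) (invSqrtAbs_nonneg _))
    _ = 8 * invSqrtAbs (x - ε) * invSqrtAbs y := by ring

theorem abs_gapKernel_le_near (hε : 0 < ε) (hx : |x| ≤ 2 * ε) (hxε : x ≠ ε) (hxε' : x ≠ -ε)
    (hy : y ≠ 0) :
    |gapKernel ε (x, y)| ≤ 8 * (invSqrtAbs (x - ε) + invSqrtAbs (x + ε)) * invSqrtAbs y := by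
  have h₁ := invSqrtAbs_nonneg (x - ε)
  have h₂ := invSqrtAbs_nonneg (x + ε)
  have h₃ := invSqrtAbs_nonneg y
  rcases le_total 0 x with hx₀ | hx₀
  · have := abs_gapKernel_le_near_of_nonneg hε hx₀ (le_of_abs_le hx) hxε hy
    nlinarith
  · have := abs_gapKernel_le_near_of_nonneg hε (neg_nonneg.mpr hx₀) (by linarith [neg_abs_le x])
      (fun h ↦ hxε' (by linarith)) hy
    rw [gapKernel_neg_fst, abs_neg, show -x - ε = -(x + ε) by ring, invSqrtAbs_even] at this
    nlinarith

theorem abs_gapKernel_le_mid (hε : 0 < ε) (hx : 4 * ε ^ 2 ≤ x ^ 2) :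
    |gapKernel ε (x, y)| ≤ 4 * ε * (|x| * |y|) / (x ^ 2 + y ^ 2 - ε ^ 2) ^ 2 :=
  abs_gapKernel_le_of_le hε.le (by nlinarith [sq_nonneg y]) le_rfl

theorem abs_gapKernel_le_cross (hε : 0 < ε) (hy : 2 * ε ≤ |y|) :
    |gapKernel ε (x, y)| ≤ 8 * ε * |x| * (|y| ^ 3)⁻¹ := by
  have hy₀ : 0 < |y| := by linarith
  have hy2 : 4 * ε ^ 2 ≤ y ^ 2 := by nlinarith [sq_abs y]
  refine (abs_gapKernel_le_of_le hε.le (c := 3 / 4 * y ^ 2) (by nlinarith)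
    (by nlinarith [sq_nonneg x])).trans ?_
  rw [← sq_abs y, div_le_iff₀ (by positivity)]
  field_simp
  nlinarith [abs_nonneg x]

theorem abs_gapKernel_le_far (hε : 0 ≤ ε) (hε₁ : ε ≤ 1) (h : 4 < x ^ 2 + y ^ 2) :
    |gapKernel ε (x, y)| ≤ ε := by
  refine (abs_gapKernel_le_of_le hε (c := 3 / 4 * (x ^ 2 + y ^ 2)) (by positivity)
    (by nlinarith)).trans ?_
  have hxy : 2 * (|x| * |y|) ≤ x ^ 2 + y ^ 2 := by
    nlinarith [sq_nonneg (|x| - |y|), sq_abs x, sq_abs y]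
  rw [div_le_iff₀ (by positivity)]
  have : 4 * (|x| * |y|) ≤ (3 / 4 * (x ^ 2 + y ^ 2)) ^ 2 := by nlinarith
  nlinarith

end GapKernelBounds

theorem one_le_sq_sub_of_notMem_Icc {c t : ℝ} (h : t ∉ Icc (c - 1) (c + 1)) : 1 ≤ (c - t) ^ 2 := by
  rw [mem_Icc, not_and_or, not_le, not_le] at h
  rcases h with h | h <;> nlinarith

theorem integrable_biotSavart_fst_integrand (x : ℝ × ℝ) {ω : ℝ × ℝ → ℝ} (hω : Integrable ω)
    (hω₁ : ∀ᵐ y : ℝ × ℝ, |ω y| ≤ 1) :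
    Integrable fun y : ℝ × ℝ ↦ (x.2 - y.2) / ((x.1 - y.1) ^ 2 + (x.2 - y.2) ^ 2) * ω y := by
  set q : ℝ → ℝ → ℝ := fun c ↦ (Icc (c - 1) (c + 1)).indicator fun t ↦ invSqrtAbs (t - c)
  have hq₀ : ∀ c t, 0 ≤ q c t := fun c t ↦ indicator_nonneg (fun _ _ ↦ invSqrtAbs_nonneg _) t
  refine integrable_mul_of_abs_le_add (c := 1) (g := fun y ↦ q x.1 y.1 * q x.2 y.2)
    (Measurable.aestronglyMeasurable (Measurable.div (by fun_prop) (by fun_prop)))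
    (Integrable.mul_prod (integrable_indicator_invSqrtAbs_sub _ _ _)
      (integrable_indicator_invSqrtAbs_sub _ _ _))
    (fun y ↦ mul_nonneg (hq₀ _ _) (hq₀ _ _)) hω hω₁ ?_
  filter_upwards [ae_fst_ne x.1, ae_snd_ne x.2] with y hy₁ hy₂
  by_cases hnear : y.1 ∈ Icc (x.1 - 1) (x.1 + 1) ∧ y.2 ∈ Icc (x.2 - 1) (x.2 + 1)
  · have hqq : q x.1 y.1 * q x.2 y.2 = invSqrtAbs (x.1 - y.1) * invSqrtAbs (x.2 - y.2) := by
      simp only [q, indicator_of_mem hnear.1, indicator_of_mem hnear.2]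
      rw [← invSqrtAbs_even (x.1 - y.1), ← invSqrtAbs_even (x.2 - y.2), neg_sub, neg_sub]
    rw [hqq]
    linarith [abs_div_sq_add_sq_le (sub_ne_zero.mpr hy₁.symm) (sub_ne_zero.mpr hy₂.symm)]
  · have hfar : 1 ≤ (x.1 - y.1) ^ 2 + (x.2 - y.2) ^ 2 := by
      rcases not_and_or.mp hnear with h | h
      · linarith [one_le_sq_sub_of_notMem_Icc h, sq_nonneg (x.2 - y.2)]
      · linarith [one_le_sq_sub_of_notMem_Icc h, sq_nonneg (x.1 - y.1)]
    linarith [abs_div_sq_add_sq_le_one hfar, mul_nonneg (hq₀ x.1 y.1) (hq₀ x.2 y.2)]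

theorem biotSavart_fst_neg_sub (ε : ℝ) {ω : ℝ × ℝ → ℝ} (hω : Integrable ω)
    (hω₁ : ∀ᵐ y : ℝ × ℝ, |ω y| ≤ 1) :
    (biotSavart ω (-ε, 0)).1 - (biotSavart ω (ε, 0)).1 =
      1 / (2 * π) * ∫ y, gapKernel ε y * ω y := by
  rw [biotSavart, biotSavart, ← mul_sub, ← integral_sub
    (integrable_biotSavart_fst_integrand _ hω hω₁) (integrable_biotSavart_fst_integrand _ hω hω₁)]
  congr 1
  refine integral_congr_ae ?_
  filter_upwards [ae_snd_ne 0] with y hy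
  have : 0 < y.2 ^ 2 := by positivity
  simp only [gapKernel]
  field_simp
  ring

theorem integral_abs_div_add_sq_sq_le {b c : ℝ} (hb : 0 ≤ b) (hc : 0 < c) :
    ∫ y in -b..b, |y| / (c + y ^ 2) ^ 2 ≤ 1 / c := by
  have hderiv : ∀ y ∈ uIcc 0 b,
      HasDerivAt (fun y ↦ -(1 / 2) * (c + y ^ 2)⁻¹) (|y| / (c + y ^ 2) ^ 2) y := by
    intro y hy
    rw [uIcc_of_le hb] at hy
    refine ((((hasDerivAt_pow 2 y).const_add c).inv (by positivity)).const_mul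
      (-(1 / 2 : ℝ))).congr_deriv ?_
    rw [abs_of_nonneg hy.1]
    field_simp
    ring
  have hcont : Continuous fun y : ℝ ↦ |y| / (c + y ^ 2) ^ 2 :=
    continuous_abs.div (by fun_prop) fun y ↦ by positivity
  have heven : (fun y : ℝ ↦ |y| / (c + y ^ 2) ^ 2).Even := fun y ↦ by simp
  rw [heven.integral_neg_self (hcont.intervalIntegrable _ _), smul_eq_mul,
    intervalIntegral.integral_eq_sub_of_hasDerivAt hderiv (hcont.intervalIntegrable _ _)]
  have : 0 ≤ (c + b ^ 2)⁻¹ := by positivity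
  simp only [ne_eq, OfNat.ofNat_ne_zero, not_false_eq_true, zero_pow, add_zero]
  linarith [one_div c]

theorem intervalIntegrable_abs_div_sq_sub_sq {e a b : ℝ} (he : 0 ≤ e) (hea : e < a)
    (hab : a ≤ b) : IntervalIntegrable (fun x ↦ |x| / (x ^ 2 - e ^ 2)) volume a b := by
  refine ContinuousOn.intervalIntegrable
    (ContinuousOn.div (by fun_prop) (by fun_prop) fun x hx ↦ ?_)
  rw [uIcc_of_le hab] at hx
  nlinarith [hx.1]

theorem integral_abs_div_sq_sub_sq {e a b : ℝ} (he : 0 ≤ e) (hea : e < a) (hab : a ≤ b) :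
    ∫ x in a..b, |x| / (x ^ 2 - e ^ 2) = (log (b ^ 2 - e ^ 2) - log (a ^ 2 - e ^ 2)) / 2 := by
  have hderiv : ∀ x ∈ uIcc a b,
      HasDerivAt (fun x ↦ log (x ^ 2 - e ^ 2) / 2) (|x| / (x ^ 2 - e ^ 2)) x := by
    intro x hx
    rw [uIcc_of_le hab] at hx
    have hx₀ : 0 < x ^ 2 - e ^ 2 := by nlinarith [hx.1]
    refine ((((hasDerivAt_pow 2 x).sub_const (e ^ 2)).log hx₀.ne').div_const 2).congr_deriv ?_
    rw [abs_of_nonneg (by linarith [hx.1])]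
    simp only [Nat.cast_ofNat, Nat.add_one_sub_one, pow_one]
    field_simp
  rw [intervalIntegral.integral_eq_sub_of_hasDerivAt hderiv
    (intervalIntegrable_abs_div_sq_sub_sq he hea hab)]
  ring

theorem intervalIntegrable_inv_abs_pow_three {a b : ℝ} (ha : 0 < a) (hab : a ≤ b) :
    IntervalIntegrable (fun t ↦ (|t| ^ 3)⁻¹) volume a b := by
  refine ContinuousOn.intervalIntegrable (ContinuousOn.inv₀ (by fun_prop) fun t ht ↦ ?_)
  rw [uIcc_of_le hab] at ht
  exact (pow_pos (abs_pos.mpr (ha.trans_le ht.1).ne') 3).ne'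

theorem integral_inv_abs_pow_three {a b : ℝ} (ha : 0 < a) (hab : a ≤ b) :
    ∫ x in a..b, (|x| ^ 3)⁻¹ = 1 / (2 * a ^ 2) - 1 / (2 * b ^ 2) := by
  have hderiv : ∀ x ∈ uIcc a b, HasDerivAt (fun x ↦ -(1 / 2) * (x ^ 2)⁻¹) (|x| ^ 3)⁻¹ x := by
    intro x hx
    rw [uIcc_of_le hab] at hx
    have hx₀ : 0 < x := ha.trans_le hx.1
    refine (((hasDerivAt_pow 2 x).inv (pow_ne_zero 2 hx₀.ne')).const_mul
      (-(1 / 2 : ℝ))).congr_deriv ?_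
    rw [abs_of_pos hx₀]
    field_simp
    ring
  rw [intervalIntegral.integral_eq_sub_of_hasDerivAt hderiv
    (intervalIntegrable_inv_abs_pow_three ha hab)]
  field_simp
  ring

theorem log_sub_log_le {ε : ℝ} (hε : 0 < ε) (hε₁ : ε ≤ 1) :
    log (4 - ε ^ 2) - log (3 * ε ^ 2) ≤ 2 * |log ε| + 1 / 2 := by
  have h₁ : log (4 - ε ^ 2) ≤ log 4 := log_le_log (by nlinarith) (by nlinarith)
  have h₂ : log (3 * ε ^ 2) = log 3 + 2 * log ε := by
    rw [log_mul (by norm_num) (by positivity), log_pow]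
    norm_num
  have h₃ : log 4 - log 3 ≤ 1 / 2 := by
    rw [← log_div (by norm_num) (by norm_num)]
    linarith [log_le_sub_one_of_pos (show (0 : ℝ) < 4 / 3 by norm_num)]
  linarith [neg_le_abs (log ε)]

theorem integral_indicator_Icc_mul_abs (c : ℝ) {b : ℝ} (hb : 0 ≤ b) :
    ∫ t, (Icc (-b) b).indicator (fun t ↦ c * |t|) t = c * b ^ 2 := by
  have heven : (fun t : ℝ ↦ c * |t|).Even := fun t ↦ by simp
  rw [integral_indicator_Icc (by linarith),
    heven.integral_neg_self ((continuous_const.mul continuous_abs).intervalIntegrable _ _),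
    intervalIntegral.integral_congr (g := fun t ↦ c * t) fun t ht ↦ by
      rw [uIcc_of_le hb] at ht; simp only [abs_of_nonneg ht.1],
    intervalIntegral.integral_const_mul, integral_id, smul_eq_mul]
  ring

theorem integral_inv_abs_pow_three_symmIoc {a b : ℝ} (ha : 0 < a) (hab : a ≤ b) :
    ∫ t in symmIoc a b, (|t| ^ 3)⁻¹ = 1 / a ^ 2 - 1 / b ^ 2 := by
  rw [Function.Even.integral_symmIoc (fun t ↦ by simp) ha.le hab
    (intervalIntegrable_inv_abs_pow_three ha hab), smul_eq_mul, integral_inv_abs_pow_three ha hab]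
  ring

def coreMajorant (ε : ℝ) (z : ℝ × ℝ) : ℝ :=
  (Icc (-(2 * ε)) (2 * ε)).indicator (fun t ↦ 8 * (invSqrtAbs (t - ε) + invSqrtAbs (t + ε))) z.1 *
    (Icc (-(2 * ε)) (2 * ε)).indicator invSqrtAbs z.2

def stripMajorant (ε : ℝ) (z : ℝ × ℝ) : ℝ :=
  (Icc (-(2 * ε)) (2 * ε)).indicator (fun t ↦ 8 * ε * |t|) z.1 *
    (symmIoc (2 * ε) 2).indicator (fun t ↦ (|t| ^ 3)⁻¹) z.2

def bandMajorant (ε : ℝ) : ℝ × ℝ → ℝ :=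
  (symmIoc (2 * ε) 2 ×ˢ Icc (-2) 2).indicator
    fun z ↦ 4 * ε * (|z.1| * |z.2|) / (z.1 ^ 2 + z.2 ^ 2 - ε ^ 2) ^ 2

def bandMarginal (ε : ℝ) : ℝ → ℝ :=
  (symmIoc (2 * ε) 2).indicator fun x ↦ 4 * ε * (|x| / (x ^ 2 - ε ^ 2))

def gapMajorant (ε : ℝ) (z : ℝ × ℝ) : ℝ :=
  coreMajorant ε z + stripMajorant ε z + bandMajorant ε z

theorem coreMajorant_nonneg (ε : ℝ) (z : ℝ × ℝ) : 0 ≤ coreMajorant ε z :=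
  mul_nonneg
    (indicator_nonneg (fun t _ ↦ mul_nonneg (by norm_num)
      (add_nonneg (invSqrtAbs_nonneg _) (invSqrtAbs_nonneg _))) _)
    (indicator_nonneg (fun t _ ↦ invSqrtAbs_nonneg t) _)

section Majorants

variable {ε : ℝ}

theorem stripMajorant_nonneg (hε : 0 ≤ ε) (z : ℝ × ℝ) : 0 ≤ stripMajorant ε z :=
  mul_nonneg (indicator_nonneg (fun _ _ ↦ by positivity) _)
    (indicator_nonneg (fun _ _ ↦ by positivity) _)

theorem bandMajorant_nonneg (hε : 0 ≤ ε) (z : ℝ × ℝ) : 0 ≤ bandMajorant ε z :=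
  indicator_nonneg (fun _ _ ↦ by positivity) _

theorem integrable_coreMajorant (hε : 0 ≤ ε) : Integrable (coreMajorant ε) := by
  have h2ε : -(2 * ε) ≤ 2 * ε := by linarith
  exact Integrable.mul_prod
    ((((intervalIntegrable_invSqrtAbs_sub ε _ _).add
      (intervalIntegrable_invSqrtAbs_add ε _ _)).const_mul 8).integrable_indicator_Icc h2ε)
    ((intervalIntegrable_invSqrtAbs _ _).integrable_indicator_Icc h2ε)

theorem integral_coreMajorant_le (hε : 0 ≤ ε) : ∫ z, coreMajorant ε z ≤ 768 * ε := by
  have h2ε : -(2 * ε) ≤ 2 * ε := by linarith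
  have hsqrt : ∀ k ≤ (4 : ℝ), √(k * ε) ≤ 2 * √ε := fun k hk ↦ by
    rw [show 2 * √ε = √(4 * ε) by rw [sqrt_mul' 4 hε, show (4 : ℝ) = 2 ^ 2 by norm_num,
      sqrt_sq (by norm_num)]]
    exact sqrt_le_sqrt (by nlinarith)
  have hfst : ∫ t, (Icc (-(2 * ε)) (2 * ε)).indicator
      (fun t ↦ 8 * (invSqrtAbs (t - ε) + invSqrtAbs (t + ε))) t = 32 * (√(3 * ε) + √ε) := by
    rw [integral_indicator_Icc h2ε, intervalIntegral.integral_const_mul,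
      intervalIntegral.integral_add (intervalIntegrable_invSqrtAbs_sub ε _ _)
        (intervalIntegrable_invSqrtAbs_add ε _ _),
      integral_invSqrtAbs_sub (by linarith) (by linarith), intervalIntegral.integral_comp_add_right,
      show -(2 * ε) + ε = -ε by ring, integral_invSqrtAbs hε (by linarith)]
    ring_nf
  have hsnd : ∫ t, (Icc (-(2 * ε)) (2 * ε)).indicator invSqrtAbs t = 4 * √(2 * ε) := by
    rw [integral_indicator_Icc h2ε, integral_invSqrtAbs (by linarith) (by linarith)]
    ring
  simp only [coreMajorant]
  rw [Measure.volume_eq_prod, integral_prod_mul, hfst, hsnd]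
  have h3 := hsqrt 3 (by norm_num)
  have h2 := hsqrt 2 (by norm_num)
  calc 32 * (√(3 * ε) + √ε) * (4 * √(2 * ε)) ≤ 32 * (2 * √ε + √ε) * (4 * (2 * √ε)) := by
        gcongr
    _ = 768 * (√ε * √ε) := by ring
    _ = 768 * ε := by rw [mul_self_sqrt hε]

theorem integrable_stripMajorant (hε : 0 < ε) (hε₁ : ε ≤ 1) : Integrable (stripMajorant ε) :=
  Integrable.mul_prod
    (((continuous_const.mul continuous_abs).intervalIntegrable _ _).integrable_indicator_Icc
      (by linarith))
    ((Function.Even.integrableOn_symmIoc (fun t ↦ by simp) (by linarith)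
      (intervalIntegrable_inv_abs_pow_three (by positivity) (by linarith))).integrable_indicator
      (measurableSet_symmIoc _ _))

theorem integral_stripMajorant_le (hε : 0 < ε) (hε₁ : ε ≤ 1) :
    ∫ z, stripMajorant ε z ≤ 8 * ε := by
  simp only [stripMajorant]
  rw [Measure.volume_eq_prod, integral_prod_mul, integral_indicator_Icc_mul_abs _ (by linarith),
    integral_indicator (measurableSet_symmIoc _ _),
    integral_inv_abs_pow_three_symmIoc (by positivity) (by linarith)]
  have : 0 ≤ 8 * ε * (2 * ε) ^ 2 * (1 / 2 ^ 2) := by positivity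
  calc 8 * ε * (2 * ε) ^ 2 * (1 / (2 * ε) ^ 2 - 1 / 2 ^ 2)
      = 8 * ε - 8 * ε * (2 * ε) ^ 2 * (1 / 2 ^ 2) := by field_simp
    _ ≤ 8 * ε := by linarith

theorem integrable_bandMajorant (hε : 0 < ε) : Integrable (bandMajorant ε) := by
  have hS : MeasurableSet (symmIoc (2 * ε) 2 ×ˢ Icc (-2 : ℝ) 2) :=
    (measurableSet_symmIoc _ _).prod measurableSet_Icc
  have hfin : volume (symmIoc (2 * ε) 2 ×ˢ Icc (-2 : ℝ) 2) ≠ ⊤ :=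
    (measure_mono (prod_mono (symmIoc_subset_Icc (by positivity)) le_rfl)).trans_lt
      (isCompact_Icc.prod isCompact_Icc).measure_lt_top |>.ne
  refine IntegrableOn.integrable_indicator ?_ hS
  refine Measure.integrableOn_of_bounded (M := 4 * ε * (2 * 2) / (3 * ε ^ 2) ^ 2) hfin
    (Measurable.div (by fun_prop) (by fun_prop)).aestronglyMeasurable
    (ae_restrict_of_forall_mem hS fun z hz ↦ ?_)
  obtain ⟨hz₁, hz₂⟩ := mem_prod.mp hz
  obtain ⟨hlow, hup⟩ := abs_mem_Icc_of_mem_symmIoc (by positivity) hz₁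
  have hr : 3 * ε ^ 2 ≤ z.1 ^ 2 + z.2 ^ 2 - ε ^ 2 := by
    nlinarith [sq_abs z.1, sq_nonneg z.2, mul_self_le_mul_self (by positivity) hlow]
  rw [Real.norm_eq_abs, abs_of_nonneg (by positivity)]
  gcongr
  exact abs_le.mpr hz₂

theorem integral_bandMajorant_slice_le (hε : 0 < ε) (x : ℝ) :
    ∫ y, bandMajorant ε (x, y) ≤ bandMarginal ε x := by
  by_cases hx : x ∈ symmIoc (2 * ε) 2
  · have hc : 3 * ε ^ 2 ≤ x ^ 2 - ε ^ 2 := by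
      nlinarith [sq_abs x,
        mul_self_le_mul_self (by positivity) (abs_mem_Icc_of_mem_symmIoc (by positivity) hx).1]
    have hslice : (fun y ↦ bandMajorant ε (x, y)) = (Icc (-2) 2).indicator
        fun y ↦ 4 * ε * |x| * (|y| / ((x ^ 2 - ε ^ 2) + y ^ 2) ^ 2) := by
      ext y
      by_cases hy : y ∈ Icc (-2 : ℝ) 2
      · simp only [bandMajorant, indicator_of_mem (mk_mem_prod hx hy), indicator_of_mem hy]
        ring_nf
      · simp [bandMajorant, hy]
    rw [hslice, integral_indicator_Icc (by norm_num), intervalIntegral.integral_const_mul,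
      bandMarginal, indicator_of_mem hx]
    have hc₀ : 0 < x ^ 2 - ε ^ 2 := (by positivity : (0 : ℝ) < 3 * ε ^ 2).trans_le hc
    exact (mul_le_mul_of_nonneg_left (integral_abs_div_add_sq_sq_le (by norm_num) hc₀)
      (by positivity)).trans_eq (by ring)
  · simp [bandMajorant, bandMarginal, hx]

theorem integrable_bandMarginal (hε : 0 < ε) (hε₁ : ε ≤ 1) : Integrable (bandMarginal ε) :=
  (Function.Even.integrableOn_symmIoc (fun x ↦ by simp) (by linarith)
    ((intervalIntegrable_abs_div_sq_sub_sq hε.le (by linarith) (by linarith)).const_mul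
      (4 * ε))).integrable_indicator (measurableSet_symmIoc _ _)

theorem integral_bandMarginal (hε : 0 < ε) (hε₁ : ε ≤ 1) :
    ∫ x, bandMarginal ε x = 4 * ε * (log (4 - ε ^ 2) - log (3 * ε ^ 2)) := by
  rw [bandMarginal, integral_indicator (measurableSet_symmIoc _ _),
    Function.Even.integral_symmIoc (fun x ↦ by simp) (by positivity) (by linarith)
      ((intervalIntegrable_abs_div_sq_sub_sq hε.le (by linarith) (by linarith)).const_mul
        (4 * ε)),
    smul_eq_mul, intervalIntegral.integral_const_mul,
    integral_abs_div_sq_sub_sq hε.le (by linarith) (by linarith),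
    show (2 : ℝ) ^ 2 - ε ^ 2 = 4 - ε ^ 2 by ring, show (2 * ε) ^ 2 - ε ^ 2 = 3 * ε ^ 2 by ring]
  ring

theorem integral_bandMajorant_le (hε : 0 < ε) (hε₁ : ε ≤ 1) :
    ∫ z, bandMajorant ε z ≤ 4 * ε * (log (4 - ε ^ 2) - log (3 * ε ^ 2)) :=
  calc ∫ z, bandMajorant ε z = ∫ x, ∫ y, bandMajorant ε (x, y) :=
        integral_prod _ (integrable_bandMajorant hε)
    _ ≤ ∫ x, bandMarginal ε x :=
        integral_mono (integrable_bandMajorant hε).integral_prod_left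
          (integrable_bandMarginal hε hε₁) (integral_bandMajorant_slice_le hε)
    _ = _ := integral_bandMarginal hε hε₁

theorem abs_gapKernel_le_gapMajorant (hε : 0 < ε) (hε₁ : ε ≤ 1) {x y : ℝ} (hx₁ : x ≠ ε)
    (hx₂ : x ≠ -ε) (hx₃ : x ≠ -2) (hy₁ : y ≠ 0) (hy₂ : y ≠ -2) :
    |gapKernel ε (x, y)| ≤ gapMajorant ε (x, y) + ε := by
  have hcore := coreMajorant_nonneg ε (x, y)
  have hstrip := stripMajorant_nonneg hε.le (x, y)
  have hband := bandMajorant_nonneg hε.le (x, y)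
  have hfar : 4 < x ^ 2 + y ^ 2 → |gapKernel ε (x, y)| ≤ gapMajorant ε (x, y) + ε := fun h ↦ by
    unfold gapMajorant; linarith [abs_gapKernel_le_far hε.le hε₁ h]
  unfold gapMajorant
  rcases mem_Icc_or_mem_symmIoc_or_lt_abs (a := 2 * ε) hx₃ with hx | hx | hx
  · rcases mem_Icc_or_mem_symmIoc_or_lt_abs (a := 2 * ε) hy₂ with hy | hy | hy
    · have : coreMajorant ε (x, y) =
          8 * (invSqrtAbs (x - ε) + invSqrtAbs (x + ε)) * invSqrtAbs y := by
        simp only [coreMajorant, indicator_of_mem hx, indicator_of_mem hy]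
      linarith [abs_gapKernel_le_near hε (abs_le.mpr hx) hx₁ hx₂ hy₁]
    · have : stripMajorant ε (x, y) = 8 * ε * |x| * (|y| ^ 3)⁻¹ := by
        simp only [stripMajorant, indicator_of_mem hx, indicator_of_mem hy]
      linarith [abs_gapKernel_le_cross (x := x) hε
        (abs_mem_Icc_of_mem_symmIoc (by positivity) hy).1]
    · exact hfar (by nlinarith [sq_abs y, abs_nonneg y, sq_nonneg x])
  · rcases le_or_gt |y| 2 with hy | hy
    · have : bandMajorant ε (x, y) = 4 * ε * (|x| * |y|) / (x ^ 2 + y ^ 2 - ε ^ 2) ^ 2 :=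
        indicator_of_mem (mk_mem_prod hx (mem_Icc.mpr (abs_le.mp hy))) _
      have hx2 : 4 * ε ^ 2 ≤ x ^ 2 := by
        nlinarith [sq_abs x, pow_le_pow_left₀ (by positivity)
          (abs_mem_Icc_of_mem_symmIoc (by positivity) hx).1 2]
      linarith [abs_gapKernel_le_mid (y := y) hε hx2]
    · exact hfar (by nlinarith [sq_abs y, abs_nonneg y, sq_nonneg x])
  · exact hfar (by nlinarith [sq_abs x, abs_nonneg x, sq_nonneg y])

theorem gapMajorant_nonneg (hε : 0 ≤ ε) : 0 ≤ gapMajorant ε := fun z ↦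
  add_nonneg (add_nonneg (coreMajorant_nonneg ε z) (stripMajorant_nonneg hε z))
    (bandMajorant_nonneg hε z)

theorem integrable_gapMajorant (hε : 0 < ε) (hε₁ : ε ≤ 1) : Integrable (gapMajorant ε) :=
  ((integrable_coreMajorant hε.le).add (integrable_stripMajorant hε hε₁)).add
    (integrable_bandMajorant hε)

theorem integral_gapMajorant_le (hε : 0 < ε) (hε₁ : ε ≤ 1) :
    ∫ z, gapMajorant ε z ≤ 8 * ε * |log ε| + 778 * ε := by
  have hcore := integrable_coreMajorant hε.le
  have hstrip := integrable_stripMajorant hε hε₁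
  simp only [gapMajorant]
  rw [integral_add (f := fun z ↦ coreMajorant ε z + stripMajorant ε z) (hcore.add hstrip)
    (integrable_bandMajorant hε), integral_add hcore hstrip]
  have hlog := mul_le_mul_of_nonneg_left (log_sub_log_le hε hε₁) (by positivity : 0 ≤ 4 * ε)
  linarith [integral_coreMajorant_le hε.le, integral_stripMajorant_le hε hε₁,
    integral_bandMajorant_le hε hε₁, abs_nonneg (log ε)]

theorem integral_gapKernel_mul_le (hε : 0 < ε) (hε₁ : ε ≤ 1) {ω : ℝ × ℝ → ℝ}
    (hω : Integrable ω) (hω₁ : ∀ᵐ y : ℝ × ℝ, |ω y| ≤ 1) :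
    ∫ y, gapKernel ε y * ω y ≤ 8 * ε * |log ε| + (778 + ∫ y, |ω y|) * ε := by
  have hmajorant : ∀ᵐ z : ℝ × ℝ, |gapKernel ε z| ≤ gapMajorant ε z + ε := by
    filter_upwards [ae_fst_ne ε, ae_fst_ne (-ε), ae_fst_ne (-2), ae_snd_ne 0, ae_snd_ne (-2)]
      with z hx₁ hx₂ hx₃ hy₁ hy₂
    exact abs_gapKernel_le_gapMajorant hε hε₁ hx₁ hx₂ hx₃ hy₁ hy₂
  have := integral_mul_le_of_abs_le_add (measurable_gapKernel ε).aestronglyMeasurable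
    (integrable_gapMajorant hε hε₁) (gapMajorant_nonneg hε.le) hω hω₁ hmajorant
  linarith [integral_gapMajorant_le hε hε₁]

end Majorants

theorem statement10_general (I : ℝ) :
    ∃ C_I : ℝ, 0 < C_I ∧ ∃ εI : ℝ, 0 < εI ∧
      ∀ ε : ℝ, 0 < ε → ε ≤ εI →
        ∀ ω : ℝ × ℝ → ℝ,
          MemLp ω ⊤ (volume : Measure (ℝ × ℝ)) →
          Integrable ω (volume : Measure (ℝ × ℝ)) →
          (∀ᵐ y : ℝ × ℝ, |ω y| ≤ 1) →
          (∫ y : ℝ × ℝ, |ω y|) ≤ I →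
          (biotSavart ω (-ε, 0)).1 - (biotSavart ω (ε, 0)).1 ≤
            (4 / π) * ε * |Real.log ε| + C_I * ε := by
  refine ⟨(778 + |I|) / (2 * π), by positivity, 1, one_pos, ?_⟩
  intro ε hε hε₁ ω _ hω hω₁ hωI
  rw [biotSavart_fst_neg_sub ε hω hω₁]
  have hgap := integral_gapKernel_mul_le hε hε₁ hω hω₁
  have hmass : ∫ y, |ω y| ≤ |I| := hωI.trans (le_abs_self I)
  calc 1 / (2 * π) * ∫ y, gapKernel ε y * ω y
      ≤ 1 / (2 * π) * (8 * ε * |log ε| + (778 + |I|) * ε) := by gcongr; nlinarith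
    _ = 4 / π * ε * |log ε| + (778 + |I|) / (2 * π) * ε := by field_simp; ring

theorem statement10 (I : ℝ) (hI : 1 ≤ I) :
    ∃ C_I : ℝ, 0 < C_I ∧ ∃ εI : ℝ, 0 < εI ∧
      ∀ ε : ℝ, 0 < ε → ε ≤ εI →
        ∀ ω : ℝ × ℝ → ℝ,
          MemLp ω ⊤ (volume : Measure (ℝ × ℝ)) →
          Integrable ω (volume : Measure (ℝ × ℝ)) →
          (∀ᵐ y : ℝ × ℝ, |ω y| ≤ 1) →
          (∫ y : ℝ × ℝ, |ω y|) ≤ I →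
          (biotSavart ω (-ε, 0)).1 - (biotSavart ω (ε, 0)).1 ≤
            (4 / π) * ε * |Real.log ε| + C_I * ε :=
  statement10_general I
end
end

section
/- For every I ≥ 1 there exist constants C_I > 0 and ε_I > 0 such that the following holds. Let ε ∈ (0, ε_I] and let ω ∈ (L^∞ ∩ L^1)(ℝ²) be Lipschitz with |ω| ≤ 1 a.e., ‖ω‖_{L¹} ≤ I, and ‖∇ω‖_{L^∞} ≤ 1/ε. Then, with m := min{ ‖∇ω‖_{L^∞}^{−1}, 1 }, the Biot–Savart velocity u of ω satisfies u₁(−ε,0) − u₁(ε,0) ≤ ((4 |ln m| + C_I)/π) ε. -/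
/-!
Subtracting the two Biot–Savart integrals gives `u₁(-ε,0) - u₁(ε,0) = (2ε/π) ∫ q ω` with
`q(y) = y₁ y₂ / (|y + ε e₁|² |y - ε e₁|²)`. As `q` is odd in `y₂`, `∫ q ω` equals
`½ ∫ q(y) (ω(y) - ω(y₁, -y₂))`, and the difference `ω(y) - ω(y₁, -y₂)` is bounded both by `2` and by
`2K|y₂|`. Splitting the plane according to `|y|`:
* for `|y| ≤ 2ε`, `2|q|` is at most `4/ε` times `1/|y + ε e₁| + 1/|y - ε e₁|`, whose integrals over
  balls of radius `3ε` are `O(ε)`;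
* for `2ε ≤ |y| ≤ m`, the Lipschitz bound gives `O(K/|y|)`, which integrates to `O(Km) = O(1)`;
* for `max(m, 2ε) ≤ |y| ≤ 1`, `2|q| ≤ 2|y₁ y₂|/|y|⁴ + O(ε²/|y|⁴)`; the angular integral of
  `2|cos θ sin θ|` is `4`, which produces the term `4 |log m|`;
* for `|y| ≥ 1`, `|q| ≤ 8/9` and the `L¹` norm of `ω` takes over.
All the radial majorants are integrated in polar coordinates.
-/

open MeasureTheory Real Filter Set
open scoped NNReal

noncomputable section

namespace BiotSavart

theorem integrable_iff_integrableOn_polarCoord_target (f : ℝ × ℝ → ℝ) :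
    Integrable f ↔
      IntegrableOn (fun p : ℝ × ℝ => p.1 • f (polarCoord.symm p)) polarCoord.target := by
  have hinj : InjOn polarCoord.symm polarCoord.target := by
    simpa using polarCoord.symm.injOn
  rw [← integrableOn_univ, integrableOn_congr_set_ae polarCoord_source_ae_eq_univ.symm,
    ← polarCoord.symm_image_target_eq_source,
    integrableOn_image_iff_integrableOn_abs_det_fderiv_smul volume
      polarCoord.open_target.measurableSet
      (fun p _ => (hasFDerivAt_polarCoord_symm p).hasFDerivWithinAt) hinj f]
  refine integrableOn_congr_fun (fun p hp => ?_) polarCoord.open_target.measurableSet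
  rw [det_fderivPolarCoordSymm, abs_of_pos hp.1]

theorem integrable_and_integral_eq_of_polar_separable {F : ℝ × ℝ → ℝ} {φ ψ : ℝ → ℝ}
    (hF : ∀ r θ : ℝ, 0 < r → r * F (r * cos θ, r * sin θ) = φ r * ψ θ)
    (hφ : IntegrableOn φ (Ioi 0)) (hψ : IntegrableOn ψ (Ioo (-π) π)) :
    Integrable F ∧ ∫ y, F y = (∫ r in Ioi (0 : ℝ), φ r) * ∫ θ in Ioo (-π) π, ψ θ := by
  have heq : EqOn (fun p : ℝ × ℝ => p.1 • F (polarCoord.symm p))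
      (fun p => φ p.1 * ψ p.2) polarCoord.target := by
    rintro ⟨r, θ⟩ hp
    simpa [polarCoord_symm_apply] using hF r θ hp.1
  have hprod : volume.restrict polarCoord.target =
      (volume.restrict (Ioi (0 : ℝ))).prod (volume.restrict (Ioo (-π) π)) := by
    rw [polarCoord_target, Measure.volume_eq_prod, Measure.prod_restrict]
  refine ⟨(integrable_iff_integrableOn_polarCoord_target F).2 ?_, ?_⟩
  · refine (integrableOn_congr_fun heq polarCoord.open_target.measurableSet).2 ?_
    rw [IntegrableOn, hprod]
    exact hφ.mul_prod hψ
  · rw [← integral_comp_polarCoord_symm F,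
      setIntegral_congr_fun polarCoord.open_target.measurableSet heq, hprod]
    exact integral_prod_mul φ ψ

theorem integrableOn_Ioi_indicator_Icc_one (R : ℝ) :
    IntegrableOn (indicator (Icc 0 R) fun _ => (1 : ℝ)) (Ioi 0) :=
  ((integrable_indicator_iff measurableSet_Icc).2
    (integrableOn_const measure_Icc_lt_top.ne)).integrableOn

theorem integral_Ioi_indicator_Icc_one {R : ℝ} (hR : 0 ≤ R) :
    ∫ r in Ioi 0, indicator (Icc 0 R) (fun _ => (1 : ℝ)) r = R := by
  have : Ioi (0 : ℝ) ∩ Icc 0 R = Ioc 0 R := by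
    ext x
    simp only [mem_inter_iff, mem_Ioi, mem_Icc, mem_Ioc]
    exact ⟨fun h => ⟨h.1, h.2.2⟩, fun h => ⟨h.1, h.1.le, h.2⟩⟩
  rw [setIntegral_indicator measurableSet_Icc, this, setIntegral_const, smul_eq_mul, mul_one,
    Real.volume_real_Ioc_of_le hR, sub_zero]

theorem integrableOn_Ioi_indicator_Icc_inv {a b : ℝ} (ha : 0 < a) :
    IntegrableOn (indicator (Icc a b) fun r : ℝ => r⁻¹) (Ioi 0) :=
  ((integrable_indicator_iff measurableSet_Icc).2
    (continuousOn_inv₀.mono fun _ hx => (ha.trans_le hx.1).ne').integrableOn_Icc).integrableOn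

theorem integral_Ioi_indicator_Icc_inv {a b : ℝ} (ha : 0 < a) (hab : a ≤ b) :
    ∫ r in Ioi 0, indicator (Icc a b) (fun r : ℝ => r⁻¹) r = log (b / a) := by
  rw [setIntegral_indicator measurableSet_Icc,
    inter_eq_right.2 ((Icc_subset_Ioi_iff hab).2 ha), integral_Icc_eq_integral_Ioc,
    ← intervalIntegral.integral_of_le hab, integral_inv_of_pos ha (ha.trans_le hab)]

theorem integrableOn_Ioi_indicator_Ici_inv_pow_three {c : ℝ} (hc : 0 < c) :
    IntegrableOn (indicator (Ici c) fun r : ℝ => (r ^ 3)⁻¹) (Ioi 0) := by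
  refine ((integrable_indicator_iff measurableSet_Ici).2 ?_).integrableOn
  refine (integrableOn_Ioi_rpow_of_lt (by norm_num : (-3 : ℝ) < -1) hc).congr_set_ae
    Ioi_ae_eq_Ici.symm |>.congr_fun (fun x _ => ?_) measurableSet_Ici
  simp [rpow_neg_ofNat]

theorem integral_Ioi_indicator_Ici_inv_pow_three {c : ℝ} (hc : 0 < c) :
    ∫ r in Ioi 0, indicator (Ici c) (fun r : ℝ => (r ^ 3)⁻¹) r = (c ^ 2)⁻¹ / 2 := by
  have h := integral_Ioi_rpow_of_lt (by norm_num : (-3 : ℝ) < -1) hc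
  rw [show (-3 : ℝ) + 1 = -2 by norm_num] at h
  simp only [rpow_neg_ofNat, zpow_neg, zpow_ofNat] at h
  rw [setIntegral_indicator measurableSet_Ici, inter_eq_right.2 (Ici_subset_Ioi.2 hc),
    integral_Ici_eq_integral_Ioi, h]
  ring

theorem integral_Ioo_neg_pi_pi_const (c : ℝ) : ∫ _ in Ioo (-π) π, c = 2 * π * c := by
  rw [setIntegral_const, Real.volume_real_Ioo_of_le (by linarith [pi_pos]), smul_eq_mul]
  ring

theorem integral_abs_cos_mul_sin : ∫ θ in -π..π, |cos θ * sin θ| = 2 := by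
  have hper : Function.Periodic (fun θ => |cos θ * sin θ|) (π / 2) := fun θ => by
    simp only [cos_add_pi_div_two, sin_add_pi_div_two, mul_neg, abs_neg, mul_comm]
  have hint : ∀ a b, IntervalIntegrable (fun θ => |cos θ * sin θ|) volume a b := fun a b =>
    (continuous_cos.mul continuous_sin).abs.intervalIntegrable a b
  have hquarter : ∫ θ in (0 : ℝ)..π / 2, |cos θ * sin θ| = 1 / 2 := by
    rw [intervalIntegral.integral_congr (g := fun θ => sin θ * cos θ) fun θ hθ => ?_,
      integral_sin_mul_cos₁]
    · simp
    rw [uIcc_of_le (by positivity)] at hθ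
    rw [mul_comm, abs_of_nonneg (mul_nonneg (sin_nonneg_of_nonneg_of_le_pi hθ.1
      (by linarith [hθ.2, pi_pos])) (cos_nonneg_of_mem_Icc ⟨by linarith [hθ.1, pi_pos], hθ.2⟩))]
  calc ∫ θ in -π..π, |cos θ * sin θ|
      = ∫ θ in -π..-π + (4 : ℤ) • (π / 2), |cos θ * sin θ| := by norm_num; ring_nf
    _ = (4 : ℤ) • ∫ θ in (0 : ℝ)..0 + π / 2, |cos θ * sin θ| := by
      rw [hper.intervalIntegral_add_zsmul_eq 4 (-π) hint, hper.intervalIntegral_add_eq (-π) 0]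
    _ = 2 := by rw [zero_add, hquarter]; norm_num

theorem integral_Ioo_neg_pi_pi_two_mul_abs_cos_mul_sin :
    ∫ θ in Ioo (-π) π, 2 * |cos θ * sin θ| = 4 := by
  rw [integral_const_mul, ← integral_Ioc_eq_integral_Ioo,
    ← intervalIntegral.integral_of_le (by linarith [pi_pos]), integral_abs_cos_mul_sin]
  norm_num

theorem polar_sq_add_sq (r θ : ℝ) : (r * cos θ) ^ 2 + (r * sin θ) ^ 2 = r ^ 2 := by
  linear_combination r ^ 2 * cos_sq_add_sin_sq θ

def cutoffInvNorm (R : ℝ) (z : ℝ × ℝ) : ℝ :=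
  if z.1 ^ 2 + z.2 ^ 2 ≤ R ^ 2 then (√(z.1 ^ 2 + z.2 ^ 2))⁻¹ else 0

def annulusKernel (a b : ℝ) (z : ℝ × ℝ) : ℝ :=
  if a ^ 2 ≤ z.1 ^ 2 + z.2 ^ 2 ∧ z.1 ^ 2 + z.2 ^ 2 ≤ b ^ 2 then
    2 * |z.1 * z.2| / (z.1 ^ 2 + z.2 ^ 2) ^ 2 else 0

def tailKernel (c : ℝ) (z : ℝ × ℝ) : ℝ :=
  if c ^ 2 ≤ z.1 ^ 2 + z.2 ^ 2 then ((z.1 ^ 2 + z.2 ^ 2) ^ 2)⁻¹ else 0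

theorem cutoffInvNorm_nonneg (R : ℝ) (z : ℝ × ℝ) : 0 ≤ cutoffInvNorm R z := by
  unfold cutoffInvNorm; split_ifs <;> positivity

theorem annulusKernel_nonneg (a b : ℝ) (z : ℝ × ℝ) : 0 ≤ annulusKernel a b z := by
  unfold annulusKernel; split_ifs <;> positivity

theorem tailKernel_nonneg (c : ℝ) (z : ℝ × ℝ) : 0 ≤ tailKernel c z := by
  unfold tailKernel; split_ifs <;> positivity

theorem integrable_and_integral_cutoffInvNorm {R : ℝ} (hR : 0 < R) :
    Integrable (cutoffInvNorm R) ∧ ∫ z, cutoffInvNorm R z = 2 * π * R := by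
  refine (integrable_and_integral_eq_of_polar_separable (fun r θ hr => ?_)
    (integrableOn_Ioi_indicator_Icc_one R) (ψ := fun _ => 1)
    (integrableOn_const measure_Ioo_lt_top.ne)).imp_right fun h => ?_
  · simp only [cutoffInvNorm, polar_sq_add_sq, sq_le_sq₀ hr.le hR.le, sqrt_sq hr.le]
    by_cases h : r ≤ R
    · simp [h, hr.le, hr.ne']
    · simp [h]
  · rw [h, integral_Ioi_indicator_Icc_one hR.le, integral_Ioo_neg_pi_pi_const]
    ring

theorem integrable_and_integral_annulusKernel {a b : ℝ} (ha : 0 < a) (hab : a ≤ b) :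
    Integrable (annulusKernel a b) ∧ ∫ z, annulusKernel a b z = 4 * log (b / a) := by
  have hb := ha.trans_le hab
  refine (integrable_and_integral_eq_of_polar_separable (fun r θ hr => ?_)
    (integrableOn_Ioi_indicator_Icc_inv (b := b) ha) (ψ := fun θ => 2 * |cos θ * sin θ|)
    ((continuous_const.mul (continuous_cos.mul continuous_sin).abs).integrableOn_Icc.mono_set
      Ioo_subset_Icc_self)).imp_right fun h => ?_
  · simp only [annulusKernel, polar_sq_add_sq, sq_le_sq₀ ha.le hr.le, sq_le_sq₀ hr.le hb.le]
    by_cases h : a ≤ r ∧ r ≤ b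
    · rw [if_pos h, indicator_of_mem (mem_Icc.2 h), show r * cos θ * (r * sin θ) =
        r ^ 2 * (cos θ * sin θ) by ring, abs_mul, abs_of_nonneg (sq_nonneg r)]
      field_simp
    · rw [if_neg h, indicator_of_notMem fun h' => h (mem_Icc.1 h'), mul_zero, zero_mul]
  · rw [h, integral_Ioi_indicator_Icc_inv ha hab, integral_Ioo_neg_pi_pi_two_mul_abs_cos_mul_sin]
    ring

theorem integrable_and_integral_tailKernel {c : ℝ} (hc : 0 < c) :
    Integrable (tailKernel c) ∧ ∫ z, tailKernel c z = π / c ^ 2 := by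
  refine (integrable_and_integral_eq_of_polar_separable (fun r θ hr => ?_)
    (integrableOn_Ioi_indicator_Ici_inv_pow_three hc) (ψ := fun _ => 1)
    (integrableOn_const measure_Ioo_lt_top.ne)).imp_right fun h => ?_
  · simp only [tailKernel, polar_sq_add_sq, sq_le_sq₀ hc.le hr.le]
    by_cases h : c ≤ r
    · simp only [if_pos h, indicator_of_mem (mem_Ici.2 h)]
      field_simp
    · simp [h]
  · rw [h, integral_Ioi_indicator_Ici_inv_pow_three hc, integral_Ioo_neg_pi_pi_const]
    field_simp

theorem abs_div_le_inv_sqrt {u D : ℝ} (h : u ^ 2 ≤ D) : |u| / D ≤ (√D)⁻¹ := by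
  rcases (sq_nonneg u |>.trans h).eq_or_lt with hD | hD
  · simp [← hD]
  calc |u| / D ≤ √D / D := by gcongr; exact abs_le_sqrt h
    _ = (√D)⁻¹ := by rw [sqrt_div_self', one_div]

def biotSavartKernelFst (x y : ℝ × ℝ) : ℝ := (x.2 - y.2) / ((x.1 - y.1) ^ 2 + (x.2 - y.2) ^ 2)

theorem biotSavart_fst (ω : ℝ × ℝ → ℝ) (x : ℝ × ℝ) :
    (biotSavart ω x).1 = 1 / (2 * π) * ∫ y, biotSavartKernelFst x y * ω y := rfl

theorem measurable_biotSavartKernelFst (x : ℝ × ℝ) : Measurable (biotSavartKernelFst x) := by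
  unfold biotSavartKernelFst; fun_prop

theorem abs_biotSavartKernelFst_mul_le (x y : ℝ × ℝ) {w : ℝ} (hw : |w| ≤ 1) :
    |biotSavartKernelFst x y * w| ≤ cutoffInvNorm 1 (x - y) + |w| := by
  set D := (x.1 - y.1) ^ 2 + (x.2 - y.2) ^ 2
  have hk : |biotSavartKernelFst x y| ≤ (√D)⁻¹ := by
    rw [biotSavartKernelFst, abs_div, abs_of_nonneg (by positivity : (0 : ℝ) ≤ D)]
    exact abs_div_le_inv_sqrt (le_add_of_nonneg_left (sq_nonneg _))
  rw [abs_mul]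
  by_cases hD : D ≤ 1
  · have : cutoffInvNorm 1 (x - y) = (√D)⁻¹ := by simp [cutoffInvNorm, D, hD]
    nlinarith [abs_nonneg (biotSavartKernelFst x y), abs_nonneg w]
  · have : cutoffInvNorm 1 (x - y) = 0 := by simp [cutoffInvNorm, D, hD]
    have h1 : (√D)⁻¹ ≤ 1 := inv_le_one_of_one_le₀ (one_le_sqrt.2 (not_le.1 hD).le)
    nlinarith [abs_nonneg (biotSavartKernelFst x y), abs_nonneg w]

theorem integrable_biotSavartKernelFst_mul {ω : ℝ × ℝ → ℝ} (hω : Integrable ω)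
    (hω1 : ∀ᵐ y, |ω y| ≤ 1) (x : ℝ × ℝ) : Integrable fun y => biotSavartKernelFst x y * ω y :=
  (((integrable_and_integral_cutoffInvNorm one_pos).1.comp_sub_left x).add hω.abs).mono'
    ((measurable_biotSavartKernelFst x).aestronglyMeasurable.mul hω.aestronglyMeasurable)
    (by filter_upwards [hω1] with y hy using abs_biotSavartKernelFst_mul_le x y hy)

def oddKernel (ε : ℝ) (y : ℝ × ℝ) : ℝ :=
  y.1 * y.2 / (((y.1 + ε) ^ 2 + y.2 ^ 2) * ((y.1 - ε) ^ 2 + y.2 ^ 2))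

theorem oddKernel_reflect (ε : ℝ) (y : ℝ × ℝ) : oddKernel ε (y.1, -y.2) = -oddKernel ε y := by
  simp only [oddKernel, neg_sq, mul_neg, neg_div]

theorem biotSavartKernelFst_sub (ε : ℝ) (y : ℝ × ℝ) :
    biotSavartKernelFst (-ε, 0) y - biotSavartKernelFst (ε, 0) y = 4 * ε * oddKernel ε y := by
  simp only [biotSavartKernelFst, oddKernel]
  rcases eq_or_ne y.2 0 with h | h
  · simp [h]
  have hA : (-ε - y.1) ^ 2 + (0 - y.2) ^ 2 ≠ 0 := by positivity
  have hB : (ε - y.1) ^ 2 + (0 - y.2) ^ 2 ≠ 0 := by positivity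
  have hA' : (y.1 + ε) ^ 2 + y.2 ^ 2 ≠ 0 := by positivity
  have hB' : (y.1 - ε) ^ 2 + y.2 ^ 2 ≠ 0 := by positivity
  field_simp
  ring

def reflectSnd : (ℝ × ℝ) ≃ᵐ (ℝ × ℝ) := (MeasurableEquiv.refl ℝ).prodCongr (MeasurableEquiv.neg ℝ)

theorem measurePreserving_reflectSnd : MeasurePreserving reflectSnd := by
  have h := (MeasurePreserving.id (volume : Measure ℝ)).prod
    (Measure.measurePreserving_neg (volume : Measure ℝ))
  rw [← Measure.volume_eq_prod] at h
  exact h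

theorem integral_comp_reflectSnd (f : ℝ × ℝ → ℝ) : ∫ y : ℝ × ℝ, f (y.1, -y.2) = ∫ y, f y :=
  measurePreserving_reflectSnd.integral_comp reflectSnd.measurableEmbedding f

theorem integrable_comp_reflectSnd {f : ℝ × ℝ → ℝ} (hf : Integrable f) :
    Integrable fun y : ℝ × ℝ => f (y.1, -y.2) :=
  (measurePreserving_reflectSnd.integrable_comp_emb reflectSnd.measurableEmbedding).2 hf

theorem integral_mul_sub_comp_reflectSnd {g ω : ℝ × ℝ → ℝ} (hg : ∀ y, g (y.1, -y.2) = -g y)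
    (hgω : Integrable fun y => g y * ω y) :
    ∫ y, g y * (ω y - ω (y.1, -y.2)) = 2 * ∫ y, g y * ω y := by
  have hrefl : (fun y => g y * ω (y.1, -y.2)) = fun y => -(g (y.1, -y.2) * ω (y.1, -y.2)) := by
    ext y; rw [hg]; ring
  simp_rw [mul_sub]
  rw [integral_sub hgω (hrefl ▸ (integrable_comp_reflectSnd hgω).neg), hrefl, integral_neg,
    integral_comp_reflectSnd fun y => g y * ω y]
  ring

theorem biotSavart_fst_sub_eq {ω : ℝ × ℝ → ℝ} (hω : Integrable ω) (hω1 : ∀ᵐ y, |ω y| ≤ 1)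
    {ε : ℝ} (hε : ε ≠ 0) :
    (biotSavart ω (-ε, 0)).1 - (biotSavart ω (ε, 0)).1 =
      ε / π * ∫ y, oddKernel ε y * (ω y - ω (y.1, -y.2)) := by
  have hint := integrable_biotSavartKernelFst_mul hω hω1
  have hq : Integrable fun y => oddKernel ε y * ω y := by
    refine (((hint (-ε, 0)).sub (hint (ε, 0))).const_mul (4 * ε)⁻¹).congr
      (Eventually.of_forall fun y => ?_)
    simp only [Pi.sub_apply, ← sub_mul, biotSavartKernelFst_sub]
    field_simp
  rw [integral_mul_sub_comp_reflectSnd (oddKernel_reflect ε) hq, biotSavart_fst, biotSavart_fst,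
    ← mul_sub, ← integral_sub (hint _) (hint _)]
  simp_rw [← sub_mul, biotSavartKernelFst_sub, mul_assoc, integral_const_mul]
  field_simp
  ring

theorem oddKernel_denom_eq (ε a b : ℝ) :
    ((a + ε) ^ 2 + b ^ 2) * ((a - ε) ^ 2 + b ^ 2) =
      (a ^ 2 + b ^ 2 - ε ^ 2) ^ 2 + 4 * ε ^ 2 * b ^ 2 := by
  ring

theorem sq_three_quarters_le_oddKernel_denom {ε a b : ℝ} (h : (2 * ε) ^ 2 ≤ a ^ 2 + b ^ 2) :
    (3 / 4 * (a ^ 2 + b ^ 2)) ^ 2 ≤ ((a + ε) ^ 2 + b ^ 2) * ((a - ε) ^ 2 + b ^ 2) := by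
  rw [oddKernel_denom_eq]
  have : 3 / 4 * (a ^ 2 + b ^ 2) ≤ a ^ 2 + b ^ 2 - ε ^ 2 := by linarith
  nlinarith [sq_nonneg (ε * b), pow_le_pow_left₀ (by positivity) this 2]

theorem abs_mul_le_half_sq_add_sq (a b : ℝ) : |a * b| ≤ (a ^ 2 + b ^ 2) / 2 := by
  rw [abs_mul]
  nlinarith [sq_nonneg (|a| - |b|), sq_abs a, sq_abs b]

theorem abs_oddKernel_le {ε : ℝ} {y : ℝ × ℝ} (hε : 0 < ε) (hy : (2 * ε) ^ 2 ≤ y.1 ^ 2 + y.2 ^ 2) :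
    |oddKernel ε y| ≤ 8 / (9 * (y.1 ^ 2 + y.2 ^ 2)) := by
  obtain ⟨a, b⟩ := y
  dsimp only at hy ⊢
  have hs : 0 < a ^ 2 + b ^ 2 := lt_of_lt_of_le (by positivity) hy
  have hden := sq_three_quarters_le_oddKernel_denom hy
  rw [oddKernel, abs_div, abs_of_pos (lt_of_lt_of_le (by positivity) hden)]
  calc |a * b| / (((a + ε) ^ 2 + b ^ 2) * ((a - ε) ^ 2 + b ^ 2))
      ≤ (a ^ 2 + b ^ 2) / 2 / (3 / 4 * (a ^ 2 + b ^ 2)) ^ 2 := by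
        gcongr
        exact abs_mul_le_half_sq_add_sq a b
    _ = 8 / (9 * (a ^ 2 + b ^ 2)) := by field_simp; ring

theorem two_mul_abs_mul_div_le {ε a b A B : ℝ} (hε : 0 < ε) (ha : |a| ≤ 2 * ε)
    (hA : ε ^ 2 ≤ A) (hb : b ^ 2 ≤ B) : 2 * (|a * b| / (A * B)) ≤ 4 / ε * (√B)⁻¹ := by
  calc 2 * (|a * b| / (A * B)) = 2 * (|a| / A) * (|b| / B) := by rw [abs_mul]; ring
    _ ≤ 2 * (2 * ε / ε ^ 2) * (√B)⁻¹ := by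
      have : 0 ≤ B := (sq_nonneg b).trans hb
      gcongr
      exact abs_div_le_inv_sqrt hb
    _ = 4 / ε * (√B)⁻¹ := by field_simp; ring

theorem two_mul_abs_oddKernel_le_of_near {ε : ℝ} {y : ℝ × ℝ} (hε : 0 < ε)
    (hy : y.1 ^ 2 + y.2 ^ 2 ≤ (2 * ε) ^ 2) :
    2 * |oddKernel ε y| ≤
      4 / ε * (cutoffInvNorm (3 * ε) (y - (-ε, 0)) + cutoffInvNorm (3 * ε) (y - (ε, 0))) := by
  obtain ⟨a, b⟩ := y
  dsimp only at hy ⊢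
  have ha : |a| ≤ 2 * ε := abs_le_of_sq_le_sq (by nlinarith) (by positivity)
  have hA : cutoffInvNorm (3 * ε) ((a, b) - (-ε, 0)) = (√((a + ε) ^ 2 + b ^ 2))⁻¹ := by
    simp only [cutoffInvNorm, Prod.mk_sub_mk, sub_neg_eq_add, sub_zero]
    exact if_pos (by nlinarith [abs_le.1 ha])
  have hB : cutoffInvNorm (3 * ε) ((a, b) - (ε, 0)) = (√((a - ε) ^ 2 + b ^ 2))⁻¹ := by
    simp only [cutoffInvNorm, Prod.mk_sub_mk, sub_zero]
    exact if_pos (by nlinarith [abs_le.1 ha])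
  have hAB : 0 ≤ ((a + ε) ^ 2 + b ^ 2) * ((a - ε) ^ 2 + b ^ 2) := by positivity
  simp only [hA, hB, oddKernel]
  rw [abs_div, abs_of_nonneg hAB, mul_add (4 / ε)]
  rcases le_total (ε ^ 2) ((a + ε) ^ 2 + b ^ 2) with hAε | hAε
  · have := two_mul_abs_mul_div_le (b := b) hε ha hAε (le_add_of_nonneg_left (sq_nonneg (a - ε)))
    have : 0 ≤ 4 / ε * (√((a + ε) ^ 2 + b ^ 2))⁻¹ := by positivity
    linarith
  · have hBε : ε ^ 2 ≤ (a - ε) ^ 2 + b ^ 2 := by nlinarith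
    have := two_mul_abs_mul_div_le (b := b) hε ha hBε (le_add_of_nonneg_left (sq_nonneg (a + ε)))
    have : 0 ≤ 4 / ε * (√((a - ε) ^ 2 + b ^ 2))⁻¹ := by positivity
    rw [mul_comm ((a + ε) ^ 2 + b ^ 2)]
    linarith

theorem abs_oddKernel_mul_le_of_le_sq {ε K m : ℝ} {y : ℝ × ℝ} (hε : 0 < ε) (hK : 0 ≤ K)
    (h2ε : (2 * ε) ^ 2 ≤ y.1 ^ 2 + y.2 ^ 2) (hm : y.1 ^ 2 + y.2 ^ 2 ≤ m ^ 2) :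
    |oddKernel ε y| * (2 * K * |y.2|) ≤ 16 * K / 9 * cutoffInvNorm m y := by
  have hs : 0 < y.1 ^ 2 + y.2 ^ 2 := lt_of_lt_of_le (by positivity) h2ε
  have hb : |y.2| ≤ √(y.1 ^ 2 + y.2 ^ 2) := abs_le_sqrt (le_add_of_nonneg_left (sq_nonneg _))
  rw [cutoffInvNorm, if_pos hm]
  calc |oddKernel ε y| * (2 * K * |y.2|)
      ≤ 8 / (9 * (y.1 ^ 2 + y.2 ^ 2)) * (2 * K * √(y.1 ^ 2 + y.2 ^ 2)) := by
        gcongr; exact abs_oddKernel_le hε h2ε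
    _ = 16 * K / 9 * (√(y.1 ^ 2 + y.2 ^ 2) / (y.1 ^ 2 + y.2 ^ 2)) := by
      field_simp; ring
    _ = 16 * K / 9 * (√(y.1 ^ 2 + y.2 ^ 2))⁻¹ := by rw [sqrt_div_self', one_div]

theorem two_mul_abs_oddKernel_le_of_annulus {ε a : ℝ} {y : ℝ × ℝ} (hε : 0 < ε)
    (h2ε : (2 * ε) ^ 2 ≤ y.1 ^ 2 + y.2 ^ 2) (ha : a ^ 2 ≤ y.1 ^ 2 + y.2 ^ 2)
    (h1 : y.1 ^ 2 + y.2 ^ 2 ≤ 1) :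
    2 * |oddKernel ε y| ≤ annulusKernel a 1 y + 32 / 9 * ε ^ 2 * tailKernel (2 * ε) y := by
  obtain ⟨a, b⟩ := y
  dsimp only at h2ε ha h1 ⊢
  rw [annulusKernel, if_pos ⟨ha, by rwa [one_pow]⟩, tailKernel, if_pos h2ε, oddKernel]
  dsimp only
  set s := a ^ 2 + b ^ 2
  have hs : 0 < s := lt_of_lt_of_le (by positivity) h2ε
  have hden := sq_three_quarters_le_oddKernel_denom h2ε
  have hden' : s ^ 2 - 2 * s * ε ^ 2 ≤ ((a + ε) ^ 2 + b ^ 2) * ((a - ε) ^ 2 + b ^ 2) := by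
    rw [oddKernel_denom_eq]; nlinarith [sq_nonneg (ε * b), sq_nonneg (ε ^ 2)]
  have hab := abs_mul_le_half_sq_add_sq a b
  have hpos : 0 < ((a + ε) ^ 2 + b ^ 2) * ((a - ε) ^ 2 + b ^ 2) :=
    lt_of_lt_of_le (by positivity) hden
  have ht := abs_nonneg (a * b)
  rw [abs_div, abs_of_pos hpos]
  calc 2 * (|a * b| / (((a + ε) ^ 2 + b ^ 2) * ((a - ε) ^ 2 + b ^ 2)))
      ≤ (2 * |a * b| + 32 / 9 * ε ^ 2) / s ^ 2 := by
        rw [← mul_div_assoc, div_le_div_iff₀ hpos (by positivity)]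
        nlinarith [mul_le_mul_of_nonneg_left hden' ht, mul_nonneg (sq_nonneg ε) hs.le,
          mul_le_mul_of_nonneg_left hden (sq_nonneg ε),
          mul_le_mul_of_nonneg_left hab (mul_nonneg (sq_nonneg ε) hs.le)]
    _ = 2 * |a * b| / s ^ 2 + 32 / 9 * ε ^ 2 * (s ^ 2)⁻¹ := by ring

def kernelMajorant (ε K m : ℝ) (y : ℝ × ℝ) : ℝ :=
  4 / ε * (cutoffInvNorm (3 * ε) (y - (-ε, 0)) + cutoffInvNorm (3 * ε) (y - (ε, 0)))
    + 16 * K / 9 * cutoffInvNorm m y + annulusKernel (max m (2 * ε)) 1 y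
    + 32 / 9 * ε ^ 2 * tailKernel (2 * ε) y

theorem abs_oddKernel_mul_sub_le {ε K m u v : ℝ} (hε : 0 < ε) (hK : 0 ≤ K) (y : ℝ × ℝ)
    (hu : |u| ≤ 1) (hv : |v| ≤ 1) (huv : |u - v| ≤ 2 * K * |y.2|) :
    |oddKernel ε y * (u - v)| ≤ kernelMajorant ε K m y + 8 / 9 * (|u| + |v|) := by
  have h₁ : 0 ≤ 4 / ε * (cutoffInvNorm (3 * ε) (y - (-ε, 0)) +
      cutoffInvNorm (3 * ε) (y - (ε, 0))) :=
    mul_nonneg (by positivity) (add_nonneg (cutoffInvNorm_nonneg _ _) (cutoffInvNorm_nonneg _ _))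
  have h₂ : 0 ≤ 16 * K / 9 * cutoffInvNorm m y :=
    mul_nonneg (by positivity) (cutoffInvNorm_nonneg _ _)
  have h₃ := annulusKernel_nonneg (max m (2 * ε)) 1 y
  have h₄ : 0 ≤ 32 / 9 * ε ^ 2 * tailKernel (2 * ε) y :=
    mul_nonneg (by positivity) (tailKernel_nonneg _ _)
  have h₅ : 0 ≤ 8 / 9 * (|u| + |v|) := by positivity
  have hq := abs_nonneg (oddKernel ε y)
  have huv' : |u - v| ≤ |u| + |v| := abs_sub u v
  rw [abs_mul, kernelMajorant]
  by_cases hnear : y.1 ^ 2 + y.2 ^ 2 ≤ (2 * ε) ^ 2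
  · have := two_mul_abs_oddKernel_le_of_near hε hnear
    nlinarith [mul_le_mul_of_nonneg_left huv' hq]
  rw [not_le] at hnear
  by_cases hlip : y.1 ^ 2 + y.2 ^ 2 ≤ m ^ 2
  · have := abs_oddKernel_mul_le_of_le_sq hε hK hnear.le hlip
    nlinarith [mul_le_mul_of_nonneg_left huv hq]
  rw [not_le] at hlip
  by_cases hann : y.1 ^ 2 + y.2 ^ 2 ≤ 1
  · have hmax : max m (2 * ε) ^ 2 ≤ y.1 ^ 2 + y.2 ^ 2 := by
      rcases max_cases m (2 * ε) with ⟨h, -⟩ | ⟨h, -⟩ <;> rw [h] <;> linarith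
    have := two_mul_abs_oddKernel_le_of_annulus hε hnear.le hmax hann
    nlinarith [mul_le_mul_of_nonneg_left huv' hq]
  · have hfar : |oddKernel ε y| ≤ 8 / 9 := (abs_oddKernel_le hε hnear.le).trans <| by
      rw [div_le_div_iff₀ (by linarith) (by norm_num)]; linarith
    nlinarith [mul_le_mul hfar huv' (abs_nonneg _) (by norm_num)]

theorem integrable_and_integral_kernelMajorant {ε m : ℝ} (K : ℝ) (hε : 0 < ε) (hm : 0 < m)
    (hm1 : m ≤ 1) (hε1 : 2 * ε ≤ 1) :
    Integrable (kernelMajorant ε K m) ∧ ∫ y, kernelMajorant ε K m y =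
      48 * π + 32 * π / 9 * (K * m) + 4 * log (1 / max m (2 * ε)) + 8 * π / 9 := by
  obtain ⟨hI₁, hE₁⟩ := integrable_and_integral_cutoffInvNorm (by positivity : 0 < 3 * ε)
  obtain ⟨hI₂, hE₂⟩ := integrable_and_integral_cutoffInvNorm hm
  obtain ⟨hI₃, hE₃⟩ := integrable_and_integral_annulusKernel
    (lt_max_of_lt_right (by positivity : 0 < 2 * ε)) (max_le hm1 hε1)
  obtain ⟨hI₄, hE₄⟩ := integrable_and_integral_tailKernel (by positivity : 0 < 2 * ε)
  have hI₀ := ((hI₁.comp_sub_right (-ε, 0)).fun_add (hI₁.comp_sub_right (ε, 0))).const_mul (4 / ε)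
  have hI₀₂ := hI₀.fun_add (hI₂.const_mul (16 * K / 9))
  have hI₀₃ := hI₀₂.fun_add hI₃
  refine ⟨hI₀₃.fun_add (hI₄.const_mul _), ?_⟩
  simp only [kernelMajorant]
  rw [integral_add hI₀₃ (hI₄.const_mul _), integral_add hI₀₂ hI₃,
    integral_add hI₀ (hI₂.const_mul _),
    integral_const_mul, integral_add (hI₁.comp_sub_right _) (hI₁.comp_sub_right _),
    integral_sub_right_eq_self, integral_sub_right_eq_self, integral_const_mul, integral_const_mul,
    hE₁, hE₂, hE₃, hE₄]
  field_simp
  ring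

theorem integral_oddKernel_mul_sub_le {ε K : ℝ} {ω : ℝ × ℝ → ℝ} (hε : 0 < ε) (hε1 : 2 * ε ≤ 1)
    (hω : Integrable ω) (hω1 : ∀ᵐ y, |ω y| ≤ 1) (hK : 0 < K)
    (hLip : ∀ x z : ℝ × ℝ, |ω x - ω z| ≤ K * √((x.1 - z.1) ^ 2 + (x.2 - z.2) ^ 2)) :
    ∫ y, oddKernel ε y * (ω y - ω (y.1, -y.2)) ≤
      4 * |log (min K⁻¹ 1)| + 53 * π + 16 / 9 * ∫ y, |ω y| := by
  set m := min K⁻¹ 1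
  have hm : 0 < m := lt_min (inv_pos.2 hK) one_pos
  have hm1 : m ≤ 1 := min_le_right _ _
  have hKm : K * m ≤ 1 := by
    calc K * m ≤ K * K⁻¹ := by gcongr; exact min_le_left _ _
      _ = 1 := mul_inv_cancel₀ hK.ne'
  have hlog : 4 * log (1 / max m (2 * ε)) ≤ 4 * |log m| := by
    rw [one_div, log_inv, abs_of_nonpos (log_nonpos hm.le hm1)]
    gcongr
    exact le_max_left _ _
  obtain ⟨hMI, hME⟩ := integrable_and_integral_kernelMajorant K hε hm hm1 hε1
  have hωr : ∀ᵐ y : ℝ × ℝ, |ω (y.1, -y.2)| ≤ 1 :=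
    measurePreserving_reflectSnd.quasiMeasurePreserving.ae hω1
  have hrefl (y : ℝ × ℝ) : |ω y - ω (y.1, -y.2)| ≤ 2 * K * |y.2| := by
    calc |ω y - ω (y.1, -y.2)| ≤ K * √((y.1 - y.1) ^ 2 + (y.2 - -y.2) ^ 2) := hLip _ _
      _ = 2 * K * |y.2| := by
        rw [show (y.1 - y.1) ^ 2 + (y.2 - -y.2) ^ 2 = (2 * y.2) ^ 2 by ring, sqrt_sq_eq_abs,
          abs_mul, abs_two]
        ring
  have hbound : ∀ᵐ y, ‖oddKernel ε y * (ω y - ω (y.1, -y.2))‖ ≤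
      kernelMajorant ε K m y + 8 / 9 * (|ω y| + |ω (y.1, -y.2)|) := by
    filter_upwards [hω1, hωr] with y h₁ h₂
    exact abs_oddKernel_mul_sub_le hε hK.le y h₁ h₂ (hrefl y)
  have hωI : Integrable fun y : ℝ × ℝ => |ω y| + |ω (y.1, -y.2)| :=
    hω.abs.add (integrable_comp_reflectSnd hω.abs)
  calc ∫ y, oddKernel ε y * (ω y - ω (y.1, -y.2))
      ≤ ‖∫ y, oddKernel ε y * (ω y - ω (y.1, -y.2))‖ := le_abs_self _
    _ ≤ ∫ y, (kernelMajorant ε K m y + 8 / 9 * (|ω y| + |ω (y.1, -y.2)|)) :=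
      norm_integral_le_of_norm_le (hMI.add (hωI.const_mul _)) hbound
    _ = (∫ y, kernelMajorant ε K m y) + 16 / 9 * ∫ y, |ω y| := by
      rw [integral_add hMI (hωI.const_mul _), integral_const_mul, integral_add hω.abs
        (integrable_comp_reflectSnd hω.abs), integral_comp_reflectSnd fun y => |ω y|]
      ring
    _ ≤ 4 * |log m| + 53 * π + 16 / 9 * ∫ y, |ω y| := by
      rw [hME]
      nlinarith [pi_pos]

end BiotSavart

open BiotSavart

/- `K` plays the role of the Lipschitz constant `‖∇ω‖_{L^∞}` of `ω` on `ℝ²`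
(w.r.t. the Euclidean distance), and `m := min{K⁻¹, 1}`. -/
theorem statement11 (I : ℝ) (hI : 1 ≤ I) :
    ∃ C_I : ℝ, 0 < C_I ∧ ∃ εI : ℝ, 0 < εI ∧
      ∀ ε : ℝ, 0 < ε → ε ≤ εI →
        ∀ ω : ℝ × ℝ → ℝ,
          MemLp ω ⊤ (volume : Measure (ℝ × ℝ)) →
          Integrable ω (volume : Measure (ℝ × ℝ)) →
          (∀ᵐ y : ℝ × ℝ, |ω y| ≤ 1) →
          (∫ y : ℝ × ℝ, |ω y|) ≤ I →
          ∀ K : ℝ≥0,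
            (∀ x z : ℝ × ℝ,
              |ω x - ω z| ≤ (K : ℝ) * Real.sqrt ((x.1 - z.1) ^ 2 + (x.2 - z.2) ^ 2)) →
            (K : ℝ) ≤ 1 / ε →
            (biotSavart ω (-ε, 0)).1 - (biotSavart ω (ε, 0)).1 ≤
              ((4 * |Real.log (min ((K : ℝ))⁻¹ 1)| + C_I) / π) * ε := by
  refine ⟨53 * π + 2 * I, by linarith [pi_pos], 1 / 2, by norm_num, ?_⟩
  intro ε hε hε2 ω _ hω hω1 hωI K hLip _
  have hbound : ∫ y, oddKernel ε y * (ω y - ω (y.1, -y.2)) ≤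
      4 * |log (min (K : ℝ)⁻¹ 1)| + (53 * π + 2 * I) := by
    rcases K.coe_nonneg.eq_or_lt with hK | hK
    -- for `K = 0` the junk value `min 0⁻¹ 1 = 0` rules out the general bound, but `ω` is constant
    · have hconst (y : ℝ × ℝ) : ω y - ω (y.1, -y.2) = 0 :=
        abs_nonpos_iff.1 ((hLip _ _).trans_eq (by rw [← hK, zero_mul]))
      simp only [hconst, mul_zero, integral_zero]
      have := abs_nonneg (log (min (K : ℝ)⁻¹ 1))
      linarith [pi_pos]
    · have : 0 ≤ ∫ y, |ω y| := integral_nonneg fun y => abs_nonneg (ω y)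
      linarith [integral_oddKernel_mul_sub_le hε (by linarith) hω hω1 hK hLip]
  calc (biotSavart ω (-ε, 0)).1 - (biotSavart ω (ε, 0)).1
      = ε / π * ∫ y, oddKernel ε y * (ω y - ω (y.1, -y.2)) := biotSavart_fst_sub_eq hω hω1 hε.ne'
    _ ≤ ε / π * (4 * |log (min (K : ℝ)⁻¹ 1)| + (53 * π + 2 * I)) := by gcongr
    _ = _ := by ring
end
end

section
/- Let C ≥ 0 and let Φ : [0,∞) → (0,∞) be differentiable with Φ(0) > 1 and Φ'(t) ≤ (2/π)(ln max{Φ(t), 1} + C) Φ(t) for all t ≥ 0. Then for all t ≥ 0, Φ(t) ≤ exp( (ln Φ(0)) · e^{ 2t/π + C(1 − e^{−2t/π}) / ln Φ(0) } ); in particular limsup_{t→∞} (ln ln max{Φ(t), e}) / t ≤ 2/π. -/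
/-!
For `f = log Φ`, the differential inequality reads `f' ≤ (2/π)(f + C)` wherever `Φ ≥ 1`. Fence `f`
by the strict supersolutions `(f(0) + C) e^{2t/π} - C + δ e^{(2/π + 1) t}`: at a touching point
`f ≥ f(0) > 0`, so `Φ ≥ 1` and the inequality applies there. Letting `δ → 0` gives the linear
Gronwall bound `f(t) ≤ (f(0) + C) e^{2t/π} - C`. The stated
double-exponential form follows from `1 + u ≤ eᵘ`, and the `limsup` from `log f(t) ≤ 2t/π + O(1)`.
-/

open Real Filter Set

theorem le_mul_exp_sub_of_hasDerivWithinAt_le {f f' : ℝ → ℝ} {a C : ℝ} (ha : 0 ≤ a)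
    (h0 : 0 ≤ f 0 + C) (hf : ∀ t, 0 ≤ t → HasDerivWithinAt f (f' t) (Ici 0) t)
    (hbound : ∀ t, 0 ≤ t → f 0 ≤ f t → f' t ≤ a * (f t + C)) {t : ℝ} (ht : 0 ≤ t) :
    f t ≤ (f 0 + C) * exp (a * t) - C := by
  have hcont : ContinuousOn f (Icc 0 t) := fun s hs =>
    (hf s hs.1).continuousWithinAt.mono Icc_subset_Ici_self
  have margin : ∀ δ > 0, f t ≤ (f 0 + C) * exp (a * t) - C + δ * exp ((a + 1) * t) := by
    intro δ hδ
    set B : ℝ → ℝ := fun s => (f 0 + C) * exp (a * s) - C + δ * exp ((a + 1) * s) with hB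
    have hB' : ∀ s, HasDerivAt B (a * (B s + C) + δ * exp ((a + 1) * s)) s := by
      intro s
      refine (((((hasDerivAt_id s).const_mul a).exp.const_mul (f 0 + C)).sub_const C).add
        (((hasDerivAt_id s).const_mul (a + 1)).exp.const_mul δ)).congr_deriv ?_
      simp only [hB, id]
      ring
    refine image_le_of_deriv_right_lt_deriv_boundary hcont
      (fun s hs => (hf s hs.1).mono (Ici_subset_Ici.2 hs.1)) (by simp [hB, hδ.le]) hB' ?_ ⟨ht, le_rfl⟩
    intro s hs hfs
    have hexp : 1 ≤ exp (a * s) := one_le_exp (mul_nonneg ha hs.1)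
    have hδs : 0 < δ * exp ((a + 1) * s) := by positivity
    have hle : f 0 ≤ f s := by rw [hfs, hB]; nlinarith
    calc f' s ≤ a * (f s + C) := hbound s hs.1 hle
      _ < _ := by rw [hfs]; linarith
  refine le_of_forall_pos_le_add fun ε hε => ?_
  simpa [div_mul_cancel₀ ε (exp_pos ((a + 1) * t)).ne'] using
    margin (ε / exp ((a + 1) * t)) (by positivity)

theorem log_le_mul_exp_sub_of_deriv_le {Φ Φ' : ℝ → ℝ} {a C : ℝ} (ha : 0 ≤ a) (hC : 0 ≤ C)
    (hΦpos : ∀ t, 0 ≤ t → 0 < Φ t) (hΦ0 : 1 ≤ Φ 0)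
    (hderiv : ∀ t, 0 ≤ t → HasDerivWithinAt Φ (Φ' t) (Ici 0) t)
    (hineq : ∀ t, 0 ≤ t → Φ' t ≤ a * (log (max (Φ t) 1) + C) * Φ t) {t : ℝ} (ht : 0 ≤ t) :
    log (Φ t) ≤ (log (Φ 0) + C) * exp (a * t) - C := by
  have hlog0 : 0 ≤ log (Φ 0) := log_nonneg hΦ0
  refine le_mul_exp_sub_of_hasDerivWithinAt_le ha (by positivity)
    (fun s hs => (hderiv s hs).log (hΦpos s hs).ne') (fun s hs hle => ?_) ht
  have hΦs : 0 < Φ s := hΦpos s hs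
  have hmax : max (Φ s) 1 = Φ s := max_eq_left ((log_nonneg_iff hΦs).1 (hlog0.trans hle))
  calc Φ' s / Φ s ≤ a * (log (Φ s) + C) * Φ s / Φ s := by
        gcongr
        simpa only [hmax] using hineq s hs
    _ = a * (log (Φ s) + C) := mul_div_cancel_right₀ _ hΦs.ne'

theorem add_mul_exp_sub_le_mul_exp {L : ℝ} (hL : 0 < L) (C x : ℝ) :
    (L + C) * exp x - C ≤ L * exp (x + C * (1 - exp (-x)) / L) := by
  have hu := add_one_le_exp (C * (1 - exp (-x)) / L)
  calc (L + C) * exp x - C = L * (exp x * (C * (1 - exp (-x)) / L + 1)) := by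
        rw [exp_neg]; field_simp; ring
    _ ≤ L * (exp x * exp (C * (1 - exp (-x)) / L)) := by gcongr
    _ = L * exp (x + C * (1 - exp (-x)) / L) := by rw [exp_add]

theorem limsup_log_div_le_of_le_mul_exp {g : ℝ → ℝ} {K a : ℝ} (hK : 0 < K)
    (hg1 : ∀ᶠ t in atTop, 1 ≤ g t) (hg : ∀ᶠ t in atTop, g t ≤ K * exp (a * t)) :
    limsup (fun t => log (g t) / t) atTop ≤ a := by
  have hlim : Tendsto (fun t => log K / t + a) atTop (nhds a) := by
    simpa using (tendsto_const_nhds.div_atTop tendsto_id).add_const a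
  have hle : (fun t => log (g t) / t) ≤ᶠ[atTop] fun t => log K / t + a := by
    filter_upwards [hg1, hg, eventually_gt_atTop 0] with t h1 h ht
    rw [div_add' _ _ _ ht.ne', div_le_div_iff_of_pos_right ht]
    calc log (g t) ≤ log (K * exp (a * t)) := log_le_log (by linarith) h
      _ = log K + a * t := by rw [log_mul hK.ne' (exp_pos _).ne', log_exp]
  have hnonneg : ∀ᶠ t in atTop, 0 ≤ log (g t) / t := by
    filter_upwards [hg1, eventually_gt_atTop 0] with t h1 ht
    exact div_nonneg (log_nonneg h1) ht.le
  calc limsup (fun t => log (g t) / t) atTop ≤ limsup (fun t => log K / t + a) atTop :=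
        limsup_le_limsup hle (isCoboundedUnder_le_of_eventually_le _ hnonneg)
          hlim.isBoundedUnder_le
    _ = a := hlim.limsup_eq

theorem statement13 (C : ℝ) (hC : 0 ≤ C) (Φ Φ' : ℝ → ℝ)
    (hΦpos : ∀ t : ℝ, 0 ≤ t → 0 < Φ t)
    (hΦ0 : 1 < Φ 0)
    (hderiv : ∀ t : ℝ, 0 ≤ t → HasDerivWithinAt Φ (Φ' t) (Ici (0 : ℝ)) t)
    (hineq : ∀ t : ℝ, 0 ≤ t →
      Φ' t ≤ (2 / π) * (Real.log (max (Φ t) 1) + C) * Φ t) :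
    (∀ t : ℝ, 0 ≤ t →
      Φ t ≤ Real.exp (Real.log (Φ 0) *
        Real.exp (2 * t / π + C * (1 - Real.exp (-(2 * t / π))) / Real.log (Φ 0))))
    ∧ Filter.limsup (fun t : ℝ => Real.log (Real.log (max (Φ t) (Real.exp 1))) / t) atTop
        ≤ 2 / π := by
  have hL0 : 0 < log (Φ 0) := log_pos hΦ0
  have hlogΦ : ∀ t, 0 ≤ t → log (Φ t) ≤ (log (Φ 0) + C) * exp (2 / π * t) - C := fun t ht =>
    log_le_mul_exp_sub_of_deriv_le (by positivity) hC hΦpos hΦ0.le hderiv hineq ht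
  refine ⟨fun t ht => ?_, ?_⟩
  · rw [← exp_log (hΦpos t ht), exp_le_exp, mul_div_right_comm 2 t π]
    exact (hlogΦ t ht).trans (add_mul_exp_sub_le_mul_exp hL0 C _)
  · refine limsup_log_div_le_of_le_mul_exp (K := log (Φ 0) + C + 1) (by positivity)
      (Eventually.of_forall fun t => (le_log_iff_exp_le (by positivity)).2 (le_max_right _ _)) ?_
    filter_upwards [eventually_ge_atTop 0] with t ht
    have hexp : 1 ≤ exp (2 / π * t) := one_le_exp (by positivity)
    rw [log_le_iff_le_exp (by positivity)]
    refine max_le ?_ (exp_le_exp.2 (by nlinarith))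
    rw [← log_le_iff_le_exp (hΦpos t ht)]
    nlinarith [hlogΦ t ht]
end

section
/- Let g(s) := s e^{|ln s|^{1/2}} for s > 0, let Ω₀ := { x ∈ (0,∞)² : 0 < x₁ < e^{−1} and x₂ < g(x₁) }, let Q(r) := (0,∞)² \ closure(B_r(0)), and for s ∈ (0, e^{−4}] let D_s := Ω₀ ∩ Q(√(s² + g(s)²)) ∩ B_{e^{−1}}(0). Then lim_{s→0⁺} (4/(π |ln s|)) ∫_{D_s} (y₁ y₂ / |y|⁴) dy = 2/π. -/
open MeasureTheory Real Filter Set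

noncomputable section

/-- `g(s) := s e^{|ln s|^{1/2}}`. -/
def gfun (s : ℝ) : ℝ := s * Real.exp (Real.sqrt |Real.log s|)

/-- `Q(r) := (0,∞)² \ closure(B_r(0))` (Euclidean ball). -/
def Qset (r : ℝ) : Set (ℝ × ℝ) :=
  (Ioi (0 : ℝ) ×ˢ Ioi (0 : ℝ)) \ {y : ℝ × ℝ | Real.sqrt (y.1 ^ 2 + y.2 ^ 2) ≤ r}

/-- `Ω₀ := { x ∈ (0,∞)² : 0 < x₁ < e⁻¹ and x₂ < g(x₁) }`. -/
def Ωzero : Set (ℝ × ℝ) :=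
  {x : ℝ × ℝ | 0 < x.1 ∧ x.1 < Real.exp (-1) ∧ 0 < x.2 ∧ x.2 < gfun x.1}

/-- `D_s := Ω₀ ∩ Q(√(s² + g(s)²)) ∩ B_{e⁻¹}(0)`. -/
def Dset (s : ℝ) : Set (ℝ × ℝ) :=
  Ωzero ∩ Qset (Real.sqrt (s ^ 2 + gfun s ^ 2)) ∩ ball2 (Real.exp (-1))

/-!
In polar coordinates the integrand is `sin θ cos θ / r`, so over a quarter-plane sector
`a < r < b`, `0 < θ < α` it integrates to `log (b / a) · sin² α / 2`. With `ℓ = |log s|`, the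
region `D_s` lies in the quarter annulus `g(s) < r < e⁻¹`, which gives `(ℓ - √ℓ - 1) / 2`, and it
contains the sector `2 g(s) < r < e^{-√ℓ}` of slope `e^{ℓ^{1/4}}` (for `x < e^{-√ℓ}` the slope
`g(x) / x = e^{√|log x|}` of the boundary of `Ω₀` is larger), which gives
`(ℓ - 2√ℓ - log 2) / 2 · sin² (arctan e^{ℓ^{1/4}})`. Both bounds are `ℓ / 2 + o(ℓ)`.
-/

open Topology

theorem setIntegral_comp_polarCoord_symm {E : Type*} [NormedAddCommGroup E] [NormedSpace ℝ E]
    (f : ℝ × ℝ → E) {s : Set (ℝ × ℝ)} (hs : MeasurableSet s) :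
    ∫ p in polarCoord.target ∩ polarCoord.symm ⁻¹' s, p.1 • f (polarCoord.symm p) =
      ∫ y in s, f y := by
  have hpre : MeasurableSet (polarCoord.symm ⁻¹' s) :=
    hs.preimage continuous_polarCoord_symm.measurable
  rw [← integral_indicator hs, ← integral_comp_polarCoord_symm, inter_comm,
    ← Measure.restrict_restrict hpre, ← integral_indicator hpre]
  congr 1 with p
  by_cases hp : polarCoord.symm p ∈ s
  · rw [indicator_of_mem hp, indicator_of_mem (show p ∈ polarCoord.symm ⁻¹' s from hp)]
  · rw [indicator_of_notMem hp, indicator_of_notMem (show p ∉ polarCoord.symm ⁻¹' s from hp),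
      smul_zero]

/-- In polar coordinates `a < r < b`, `0 < θ < α` (for `α ≤ π / 2`). -/
def quarterSector (a b α : ℝ) : Set (ℝ × ℝ) :=
  {y | 0 < y.1 ∧ 0 < y.2 ∧ a < √(y.1 ^ 2 + y.2 ^ 2) ∧ √(y.1 ^ 2 + y.2 ^ 2) < b ∧
    arctan (y.2 / y.1) < α}

theorem measurableSet_quarterSector (a b α : ℝ) : MeasurableSet (quarterSector a b α) := by
  have hr : Measurable fun y : ℝ × ℝ => √(y.1 ^ 2 + y.2 ^ 2) := by fun_prop
  have hθ : Measurable fun y : ℝ × ℝ => arctan (y.2 / y.1) := by fun_prop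
  exact (measurableSet_lt measurable_const measurable_fst).inter
    ((measurableSet_lt measurable_const measurable_snd).inter
    ((measurableSet_lt measurable_const hr).inter
    ((measurableSet_lt hr measurable_const).inter (measurableSet_lt hθ measurable_const))))

theorem sqrt_polarCoord_symm {r : ℝ} (hr : 0 ≤ r) (θ : ℝ) :
    √((r * cos θ) ^ 2 + (r * sin θ) ^ 2) = r := by
  rw [show (r * cos θ) ^ 2 + (r * sin θ) ^ 2 = r ^ 2 by
    linear_combination r ^ 2 * sin_sq_add_cos_sq θ, sqrt_sq hr]

theorem mem_Ioo_of_cos_pos_of_sin_pos {θ : ℝ} (hθ : θ ∈ Ioo (-π) π) (hcos : 0 < cos θ)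
    (hsin : 0 < sin θ) : θ ∈ Ioo 0 (π / 2) := by
  constructor
  · by_contra! h
    exact (sin_nonpos_of_nonpos_of_neg_pi_le h hθ.1.le).not_gt hsin
  · by_contra! h
    exact (cos_nonpos_of_pi_div_two_le_of_le h (by linarith [hθ.2])).not_gt hcos

theorem polarCoord_target_inter_preimage_quarterSector {a b α : ℝ} (ha : 0 ≤ a)
    (hα : α ≤ π / 2) :
    polarCoord.target ∩ polarCoord.symm ⁻¹' quarterSector a b α = Ioo a b ×ˢ Ioo 0 α := by
  ext ⟨r, θ⟩
  simp only [polarCoord_target, polarCoord_symm_apply, quarterSector, mem_inter_iff, mem_prod,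
    mem_preimage, mem_ofPred_eq, mem_Ioi, mem_Ioo]
  constructor
  · rintro ⟨⟨hr, hθ⟩, hx, hy, har, hrb, hθα⟩
    have hcos : 0 < cos θ := pos_of_mul_pos_right hx hr.le
    obtain ⟨hθ0, hθπ⟩ := mem_Ioo_of_cos_pos_of_sin_pos hθ hcos (pos_of_mul_pos_right hy hr.le)
    rw [sqrt_polarCoord_symm hr.le] at har hrb
    rw [mul_div_mul_left _ _ hr.ne', ← tan_eq_sin_div_cos,
      arctan_tan (by linarith) hθπ] at hθα
    exact ⟨⟨har, hrb⟩, hθ0, hθα⟩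
  · rintro ⟨⟨har, hrb⟩, hθ0, hθα⟩
    have hr : 0 < r := ha.trans_lt har
    have hθπ : θ < π / 2 := hθα.trans_le hα
    refine ⟨⟨hr, by linarith, by linarith⟩, mul_pos hr (cos_pos_of_mem_Ioo ⟨by linarith, hθπ⟩),
      mul_pos hr (sin_pos_of_pos_of_lt_pi hθ0 (by linarith)), ?_⟩
    rw [sqrt_polarCoord_symm hr.le, mul_div_mul_left _ _ hr.ne', ← tan_eq_sin_div_cos,
      arctan_tan (by linarith) hθπ]
    exact ⟨har, hrb, hθα⟩

theorem integral_quarterSector {a b α : ℝ} (ha : 0 < a) (hab : a ≤ b) (hα : 0 ≤ α)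
    (hα' : α ≤ π / 2) :
    ∫ y in quarterSector a b α, y.1 * y.2 / (y.1 ^ 2 + y.2 ^ 2) ^ 2 =
      (log b - log a) * (sin α ^ 2 / 2) := by
  rw [← setIntegral_comp_polarCoord_symm _ (measurableSet_quarterSector a b α),
    polarCoord_target_inter_preimage_quarterSector ha.le hα']
  have hintegrand : EqOn (fun p : ℝ × ℝ => p.1 • ((polarCoord.symm p).1 * (polarCoord.symm p).2 /
      ((polarCoord.symm p).1 ^ 2 + (polarCoord.symm p).2 ^ 2) ^ 2))
      (fun p => p.1⁻¹ * (sin p.2 * cos p.2)) (Ioo a b ×ˢ Ioo 0 α) := by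
    rintro ⟨r, θ⟩ ⟨hr, -⟩
    have hr0 : r ≠ 0 := (ha.trans hr.1).ne'
    have hsq : (r * cos θ) ^ 2 + (r * sin θ) ^ 2 = r ^ 2 := by
      linear_combination r ^ 2 * sin_sq_add_cos_sq θ
    simp only [polarCoord_symm_apply, smul_eq_mul, hsq]
    field_simp
  rw [setIntegral_congr_fun (measurableSet_Ioo.prod measurableSet_Ioo) hintegrand,
    Measure.volume_eq_prod,
    setIntegral_prod_mul (L := ℝ) (fun r => r⁻¹) (fun θ => sin θ * cos θ),
    ← integral_Ioc_eq_integral_Ioo, ← integral_Ioc_eq_integral_Ioo,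
    ← intervalIntegral.integral_of_le hab, ← intervalIntegral.integral_of_le hα, integral_inv_of_pos ha (ha.trans_le hab),
    integral_sin_mul_cos₁, log_div (ha.trans_le hab).ne' ha.ne']
  simp

theorem integrableOn_quarterSector {a : ℝ} (ha : 0 < a) (b α : ℝ) :
    IntegrableOn (fun y : ℝ × ℝ => y.1 * y.2 / (y.1 ^ 2 + y.2 ^ 2) ^ 2) (quarterSector a b α) := by
  have hsub : quarterSector a b α ⊆ Ioo 0 b ×ˢ Ioo 0 b := by
    rintro y ⟨hy₁, hy₂, -, hyb, -⟩
    have h₁ : y.1 < √(y.1 ^ 2 + y.2 ^ 2) := lt_sqrt_of_sq_lt (by nlinarith)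
    have h₂ : y.2 < √(y.1 ^ 2 + y.2 ^ 2) := lt_sqrt_of_sq_lt (by nlinarith)
    exact ⟨⟨hy₁, h₁.trans hyb⟩, hy₂, h₂.trans hyb⟩
  have hfin : volume (quarterSector a b α) ≠ ⊤ := ((measure_mono hsub).trans_lt
    ((Metric.isBounded_Ioo 0 b).prod (Metric.isBounded_Ioo 0 b)).measure_lt_top).ne
  have hbound : ∀ y ∈ quarterSector a b α,
      ‖y.1 * y.2 / (y.1 ^ 2 + y.2 ^ 2) ^ 2‖ ≤ 1 / (2 * a ^ 2) := by
    rintro y ⟨hy₁, hy₂, hay, -, -⟩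
    have har : a ^ 2 < y.1 ^ 2 + y.2 ^ 2 := (lt_sqrt ha.le).1 hay
    rw [norm_of_nonneg (by positivity), div_le_div_iff₀ (by positivity) (by positivity)]
    nlinarith [mul_le_mul (two_mul_le_add_sq y.1 y.2) har.le (by positivity) (by positivity)]
  exact Measure.integrableOn_of_bounded hfin (Measurable.aestronglyMeasurable (by fun_prop))
    ((ae_restrict_iff' (measurableSet_quarterSector a b α)).2 (.of_forall hbound))

theorem measurableSet_Dset (s : ℝ) : MeasurableSet (Dset s) := by
  have : Measurable gfun := by unfold gfun; fun_prop
  unfold Dset Ωzero Qset ball2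
  measurability

theorem Dset_subset_quarterSector (s : ℝ) : Dset s ⊆ quarterSector (gfun s) (exp (-1)) (π / 2) := by
  rintro y ⟨⟨⟨hy₁, -, hy₂, -⟩, -, hyQ⟩, hyB⟩
  have hg : gfun s ≤ √(s ^ 2 + gfun s ^ 2) := (le_abs_self _).trans (abs_le_sqrt (by nlinarith))
  exact ⟨hy₁, hy₂, hg.trans_lt (not_le.1 hyQ), hyB, arctan_lt_pi_div_two _⟩

theorem quarterSector_subset_Dset {s a t : ℝ} (ha : √(s ^ 2 + gfun s ^ 2) ≤ a) (ht : 1 ≤ t) :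
    quarterSector a (exp (-t)) (arctan (exp √t)) ⊆ Dset s := by
  rintro y ⟨hy₁, hy₂, hay, hyb, hyα⟩
  have hy₁b : y.1 < exp (-t) := (lt_sqrt_of_sq_lt (by nlinarith)).trans hyb
  have hb : exp (-t) ≤ exp (-1) := exp_le_exp.2 (by linarith)
  have hlog : t < |log y.1| := by
    rw [abs_of_neg ((log_lt_log hy₁ hy₁b).trans_le (by simp; linarith))]
    linarith [(log_lt_log_iff hy₁ (exp_pos _)).2 hy₁b, log_exp (-t)]
  have hslope : y.2 / y.1 < exp √|log y.1| :=
    (arctan_lt_arctan_iff.1 hyα).trans (exp_lt_exp.2 (sqrt_lt_sqrt (by linarith) hlog))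
  have hy₂g : y.2 < gfun y.1 := by
    rw [div_lt_iff₀ hy₁] at hslope
    rw [gfun, mul_comm]; exact hslope
  exact ⟨⟨⟨hy₁, hy₁b.trans_le hb, hy₂, hy₂g⟩, ⟨hy₁, hy₂⟩, not_le.2 (ha.trans_lt hay)⟩,
    hyb.trans_le hb⟩

theorem integrand_nonneg_ae_restrict {t : Set (ℝ × ℝ)} (ht : MeasurableSet t)
    (hquad : t ⊆ Ioi 0 ×ˢ Ioi 0) :
    0 ≤ᵐ[volume.restrict t] fun y : ℝ × ℝ => y.1 * y.2 / (y.1 ^ 2 + y.2 ^ 2) ^ 2 := by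
  refine (ae_restrict_iff' ht).2 (.of_forall fun y hy => ?_)
  obtain ⟨hy₁, hy₂⟩ := hquad hy
  exact div_nonneg (mul_pos hy₁ hy₂).le (by positivity)

theorem Dset_subset_Ioi_prod_Ioi (s : ℝ) : Dset s ⊆ Ioi 0 ×ˢ Ioi 0 :=
  fun _ hy => ⟨hy.1.1.1, hy.1.1.2.2.1⟩

theorem log_gfun {s : ℝ} (hs : 0 < s) (hs₁ : s ≤ 1) : log (gfun s) = log s + √(-log s) := by
  rw [gfun, log_mul hs.ne' (exp_pos _).ne', log_exp, abs_of_nonpos (log_nonpos hs.le hs₁)]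

theorem integral_Dset_le {s : ℝ} (hs : 0 < s) (hℓ : 16 ≤ -log s) :
    ∫ y in Dset s, y.1 * y.2 / (y.1 ^ 2 + y.2 ^ 2) ^ 2 ≤ (-log s - √(-log s) - 1) / 2 := by
  have hs₁ : s ≤ 1 := by rw [← exp_log hs]; exact exp_le_one_iff.2 (by linarith)
  have hg : 0 < gfun s := mul_pos hs (exp_pos _)
  have ht : 4 ≤ √(-log s) := le_sqrt_of_sq_le (by linarith)
  have hge : gfun s ≤ exp (-1) := by
    rw [← exp_log hg, log_gfun hs hs₁]
    exact exp_le_exp.2 (by nlinarith [sq_sqrt (show 0 ≤ -log s by linarith)])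
  calc ∫ y in Dset s, y.1 * y.2 / (y.1 ^ 2 + y.2 ^ 2) ^ 2
      ≤ ∫ y in quarterSector (gfun s) (exp (-1)) (π / 2), y.1 * y.2 / (y.1 ^ 2 + y.2 ^ 2) ^ 2 :=
        setIntegral_mono_set (integrableOn_quarterSector hg _ _)
          (integrand_nonneg_ae_restrict (measurableSet_quarterSector _ _ _)
            fun _ hy => ⟨hy.1, hy.2.1⟩)
          (Dset_subset_quarterSector s).eventuallyLE
    _ = (-log s - √(-log s) - 1) / 2 := by
      rw [integral_quarterSector hg hge pi_div_two_pos.le le_rfl, log_exp, log_gfun hs hs₁,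
        sin_pi_div_two]
      ring

theorem le_integral_Dset {s : ℝ} (hs : 0 < s) (hℓ : 16 ≤ -log s) :
    (-log s - 2 * √(-log s) - log 2) / 2 * sin (arctan (exp √√(-log s))) ^ 2 ≤
      ∫ y in Dset s, y.1 * y.2 / (y.1 ^ 2 + y.2 ^ 2) ^ 2 := by
  set t := √(-log s)
  have hs₁ : s ≤ 1 := by rw [← exp_log hs]; exact exp_le_one_iff.2 (by linarith)
  have hg : 0 < gfun s := mul_pos hs (exp_pos _)
  have ht : 4 ≤ t := le_sqrt_of_sq_le (by linarith)
  have hsg : s ≤ gfun s := le_mul_of_one_le_right hs.le (one_le_exp (sqrt_nonneg _))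
  have hA : √(s ^ 2 + gfun s ^ 2) ≤ 2 * gfun s := sqrt_le_iff.2 ⟨by positivity, by nlinarith⟩
  have hloga : log (2 * gfun s) = log 2 + log s + t := by
    rw [log_mul two_ne_zero hg.ne', log_gfun hs hs₁]; ring
  have hab : 2 * gfun s ≤ exp (-t) := by
    rw [← exp_log (by positivity : 0 < 2 * gfun s), hloga]
    refine exp_le_exp.2 ?_
    nlinarith [sq_sqrt (show 0 ≤ -log s by linarith), log_two_lt_d9]
  calc (-log s - 2 * t - log 2) / 2 * sin (arctan (exp √t)) ^ 2
      = (log (exp (-t)) - log (2 * gfun s)) * (sin (arctan (exp √t)) ^ 2 / 2) := by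
        rw [log_exp, hloga]; ring
    _ = ∫ y in quarterSector (2 * gfun s) (exp (-t)) (arctan (exp √t)),
          y.1 * y.2 / (y.1 ^ 2 + y.2 ^ 2) ^ 2 :=
        (integral_quarterSector (by positivity) hab (arctan_pos.2 (exp_pos _)).le
          (arctan_lt_pi_div_two _).le).symm
    _ ≤ ∫ y in Dset s, y.1 * y.2 / (y.1 ^ 2 + y.2 ^ 2) ^ 2 :=
        setIntegral_mono_set
          ((integrableOn_quarterSector hg _ _).mono_set (Dset_subset_quarterSector s))
          (integrand_nonneg_ae_restrict (measurableSet_Dset s) (Dset_subset_Ioi_prod_Ioi s))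
          (quarterSector_subset_Dset hA (by linarith)).eventuallyLE

theorem tendsto_sub_mul_sqrt_sub_div_atTop (c d : ℝ) :
    Tendsto (fun x => (x - c * √x - d) / x) atTop (𝓝 1) := by
  have h : Tendsto (fun x => 1 - c * (√x)⁻¹ - d * x⁻¹) atTop (𝓝 (1 - c * 0 - d * 0)) :=
    ((tendsto_inv_atTop_zero.comp tendsto_sqrt_atTop).const_mul c |>.const_sub 1).sub
      (tendsto_inv_atTop_zero.const_mul d)
  rw [mul_zero, mul_zero, sub_zero, sub_zero] at h
  refine h.congr' ?_
  filter_upwards [eventually_gt_atTop 0] with x hx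
  have : √x ≠ 0 := (sqrt_pos.2 hx).ne'
  field_simp
  linear_combination c * sq_sqrt hx.le

theorem tendsto_sin_arctan_sq_atTop : Tendsto (fun x => sin (arctan x) ^ 2) atTop (𝓝 1) := by
  have h := ((continuous_sin.pow 2).tendsto (π / 2)).comp
    (tendsto_nhds_of_tendsto_nhdsWithin tendsto_arctan_atTop)
  rwa [Pi.pow_apply, sin_pi_div_two, one_pow] at h

theorem statement14 :
    Tendsto
      (fun s : ℝ =>
        (4 / (π * |Real.log s|)) * ∫ y in Dset s, y.1 * y.2 / (y.1 ^ 2 + y.2 ^ 2) ^ 2)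
      (nhdsWithin 0 (Ioi (0 : ℝ))) (nhds (2 / π)) := by
  have hℓ : Tendsto (fun s => -log s) (𝓝[>] 0) atTop :=
    tendsto_neg_atBot_atTop.comp tendsto_log_nhdsGT_zero
  have hangle : Tendsto (fun ℓ => sin (arctan (exp √√ℓ)) ^ 2) atTop (𝓝 1) :=
    tendsto_sin_arctan_sq_atTop.comp
      (tendsto_exp_atTop.comp (tendsto_sqrt_atTop.comp tendsto_sqrt_atTop))
  have hlower := ((tendsto_sub_mul_sqrt_sub_div_atTop 2 (log 2)).mul hangle).const_mul (2 / π)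
  have hupper := (tendsto_sub_mul_sqrt_sub_div_atTop 1 1).const_mul (2 / π)
  rw [one_mul, mul_one] at hlower
  rw [mul_one] at hupper
  have hsmall : ∀ᶠ s in 𝓝[>] 0, 0 < s ∧ 16 ≤ -log s :=
    Eventually.and self_mem_nhdsWithin (hℓ.eventually_ge_atTop 16)
  refine tendsto_of_tendsto_of_tendsto_of_le_of_le' (hlower.comp hℓ) (hupper.comp hℓ)
    (hsmall.mono fun s ⟨hs, h16⟩ => ?_) (hsmall.mono fun s ⟨hs, h16⟩ => ?_) <;>
    rw [Function.comp_apply, abs_of_neg (by linarith)]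
  · calc _ = 4 / (π * -log s) *
          ((-log s - 2 * √(-log s) - log 2) / 2 * sin (arctan (exp √√(-log s))) ^ 2) := by
          field_simp; ring
      _ ≤ _ := by gcongr; exact le_integral_Dset hs h16
  · calc _ ≤ 4 / (π * -log s) * ((-log s - √(-log s) - 1) / 2) := by
          gcongr; exact integral_Dset_le hs h16
      _ = _ := by field_simp; ring
end
end

section
/- Let s₀ ∈ (0, e^{−1}], c₁ ≥ 0, c₂ ≥ 0, and let h : (0, s₀] → ℝ be continuous with lim_{s→0⁺} h(s) = 2/π. Then there exists ε* ∈ (0, s₀] such that for every ε₀ ∈ (0, ε*] there is a decreasing continuously differentiable function ε : [0,∞) → (0, s₀] with ε(0) = ε₀ satisfying, for all t ≥ 0, ε'(t) > −( h(ε(t)) |ln ε(t)| − c₁ |ln ε(t)|^{1/2} − c₂ ) ε(t), and lim_{t→∞} ln( −ln ε(t) ) / t = 2/π. -/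
/-!
Substituting `ε = exp (-exp φ)` turns the differential inequality into `φ' < M φ` with
`M x = h (exp (-exp x)) - c₁ e^{-x/2} - c₂ e^{-x}` (`phaseRate`), and `log (-log ε t) / t`
into `φ t / t`. As `M → 2/π`, we have `M ≥ 1/2` beyond some `A`, and `ε* = exp (-exp A)`.
Averaging the running infimum of `M` over unit intervals gives a continuous nondecreasing
minorant `G` of `M` on `[A, ∞)` with `G → 2/π`. Taking `φ' t = G (φ₀ + t/4)` minus a vanishing
slack forces `φ t ≥ φ₀ + t/4`, hence `φ' t < G (φ t) ≤ M (φ t)`, and `φ t / t → 2/π`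
because `φ' → 2/π`.
-/

open Real Filter Set Topology MeasureTheory Asymptotics

noncomputable def tailInf (F : ℝ → ℝ) (a x : ℝ) : ℝ := ⨅ y : Ici (max x a), F y

section TailInf

variable {F : ℝ → ℝ} {a c : ℝ}

theorem bddBelow_tailInf (hF : ∀ x ≥ a, c ≤ F x) (x : ℝ) :
    BddBelow (range fun y : Ici (max x a) => F y) :=
  ⟨c, by rintro _ ⟨y, rfl⟩; exact hF y (le_of_max_le_right y.2)⟩

theorem le_tailInf (hF : ∀ x ≥ a, c ≤ F x) (x : ℝ) : c ≤ tailInf F a x :=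
  le_ciInf fun y => hF y (le_of_max_le_right y.2)

theorem tailInf_le (hF : ∀ x ≥ a, c ≤ F x) {x y : ℝ} (hxy : x ≤ y) (hay : a ≤ y) :
    tailInf F a x ≤ F y :=
  ciInf_le (bddBelow_tailInf hF x) ⟨y, max_le hxy hay⟩

theorem monotone_tailInf (hF : ∀ x ≥ a, c ≤ F x) : Monotone (tailInf F a) := fun _ _ hxx' =>
  le_ciInf fun y => tailInf_le hF (hxx'.trans (le_of_max_le_left y.2)) (le_of_max_le_right y.2)

theorem tendsto_tailInf (hF : ∀ x ≥ a, c ≤ F x) {L : ℝ} (hL : Tendsto F atTop (𝓝 L)) :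
    Tendsto (tailInf F a) atTop (𝓝 L) := by
  refine tendsto_order.2 ⟨fun l hl => ?_, fun u hu => ?_⟩
  · obtain ⟨l', hll', hl'L⟩ := exists_between hl
    obtain ⟨T, hT⟩ := eventually_atTop.1 (hL.eventually (lt_mem_nhds hl'L))
    filter_upwards [eventually_ge_atTop T] with x hx
    exact hll'.trans_le <| le_ciInf fun y => (hT y (hx.trans (le_of_max_le_left y.2))).le
  · filter_upwards [hL.eventually (gt_mem_nhds hu), eventually_ge_atTop a] with x hx hxa
    exact (tailInf_le hF le_rfl hxa).trans_lt hx

end TailInf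

theorem exists_continuous_monotone_minorant {F : ℝ → ℝ} {a c L : ℝ} (hF : ∀ x ≥ a, c ≤ F x)
    (hL : Tendsto F atTop (𝓝 L)) :
    ∃ G : ℝ → ℝ, Continuous G ∧ Monotone G ∧ (∀ x, c ≤ G x) ∧ (∀ x ≥ a, G x ≤ F x) ∧
      Tendsto G atTop (𝓝 L) := by
  set m := tailInf F a
  have hm : Monotone m := monotone_tailInf hF
  have hint (u v : ℝ) : IntervalIntegrable m volume u v := hm.intervalIntegrable
  have hmean (x : ℝ) : m (x - 1) ≤ ∫ y in (x - 1)..x, m y ∧ ∫ y in (x - 1)..x, m y ≤ m x := by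
    have hx : x - 1 ≤ x := by linarith
    constructor
    · simpa using intervalIntegral.integral_mono_on hx intervalIntegrable_const (hint _ _)
        fun y hy => hm hy.1
    · simpa using intervalIntegral.integral_mono_on hx (hint _ _) intervalIntegrable_const
        fun y hy => hm hy.2
  refine ⟨fun x => ∫ y in (x - 1)..x, m y, ?_, fun x x' hxx' => ?_, fun x => ?_, fun x hx => ?_, ?_⟩
  · have hP := intervalIntegral.continuous_primitive hint 0
    have hG : (fun x => ∫ y in (x - 1)..x, m y) =
        fun x => (∫ y in (0 : ℝ)..x, m y) - ∫ y in (0 : ℝ)..(x - 1), m y :=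
      funext fun x => (intervalIntegral.integral_interval_sub_left (hint 0 _) (hint 0 _)).symm
    rw [hG]
    exact hP.sub (hP.comp (continuous_sub_right 1))
  · have hshift (x : ℝ) : ∫ y in (x - 1)..x, m y = ∫ u in (0 : ℝ)..1, m (u + (x - 1)) := by
      rw [intervalIntegral.integral_comp_add_right]; ring_nf
    dsimp only
    rw [hshift, hshift]
    exact intervalIntegral.integral_mono_on zero_le_one
      (hm.comp (monotone_id.add_const _)).intervalIntegrable
      (hm.comp (monotone_id.add_const _)).intervalIntegrable
      fun u _ => hm (by linarith)
  · exact (le_tailInf hF _).trans (hmean x).1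
  · exact (hmean x).2.trans (tailInf_le hF le_rfl hx)
  · have hmL := tendsto_tailInf hF hL
    exact tendsto_of_tendsto_of_tendsto_of_le_of_le
      (hmL.comp (tendsto_atTop_add_const_right _ (-1) tendsto_id)) hmL
      (fun x => (hmean x).1) fun x => (hmean x).2

theorem tendsto_div_self_of_hasDerivAt {φ g : ℝ → ℝ} {L : ℝ} (hφ : ∀ t, HasDerivAt φ (g t) t)
    (hg : Tendsto g atTop (𝓝 L)) : Tendsto (fun t => φ t / t) atTop (𝓝 L) := by
  set ψ := fun t => φ t - L * t
  have hψ' (t : ℝ) : HasDerivAt ψ (g t - L) t := by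
    simpa using (hφ t).fun_sub ((hasDerivAt_id' t).const_mul L)
  have hψ : ψ =o[atTop] id := by
    refine IsLittleO.of_bound fun e he => ?_
    obtain ⟨T, hT⟩ := eventually_atTop.1
      ((hg.eventually (Metric.closedBall_mem_nhds L (half_pos he))).and (eventually_ge_atTop 0))
    filter_upwards [eventually_ge_atTop T, eventually_ge_atTop (2 * |ψ T| / e)] with t hTt htψ
    have hslope : ‖ψ t - ψ T‖ ≤ e / 2 * (t - T) :=
      norm_image_sub_le_of_norm_deriv_le_segment' (fun s _ => (hψ' s).hasDerivWithinAt)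
        (fun s hs => (hT s hs.1).1) t ⟨hTt, le_rfl⟩
    have hT0 := (hT T le_rfl).2
    rw [Real.norm_eq_abs] at hslope
    rw [Real.norm_eq_abs, Real.norm_eq_abs, id, abs_of_nonneg (hT0.trans hTt)]
    rw [div_le_iff₀ he] at htψ
    linarith [abs_sub_abs_le_abs_sub (ψ t) (ψ T), mul_nonneg he.le hT0]
  have hψL := hψ.tendsto_div_nhds_zero.add_const L
  rw [zero_add] at hψL
  refine hψL.congr' ?_
  filter_upwards [eventually_ne_atTop 0] with t ht
  simp only [ψ, id]
  field_simp
  ring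

theorem exists_phase_lt {M : ℝ → ℝ} {A c L : ℝ} (hc : 0 < c) (hM : ∀ x ≥ A, c ≤ M x)
    (hML : Tendsto M atTop (𝓝 L)) {φ₀ : ℝ} (hφ₀ : A ≤ φ₀) :
    ∃ φ g : ℝ → ℝ, φ 0 = φ₀ ∧ (∀ t, HasDerivAt φ (g t) t) ∧ Continuous g ∧ (∀ t, 0 < g t) ∧
      (∀ t ≥ 0, A ≤ φ t ∧ g t < M (φ t)) ∧ Tendsto (fun t => φ t / t) atTop (𝓝 L) := by
  obtain ⟨G, hGc, hGm, hcG, hGM, hGL⟩ := exists_continuous_monotone_minorant hM hML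
  set g := fun t => G (φ₀ + c / 2 * t) - c / 2 * exp (-|t|)
  have hgc : Continuous g := by fun_prop
  have hg (t : ℝ) : c / 2 ≤ g t := by
    have := mul_le_mul_of_nonneg_left (exp_le_one_iff.2 (neg_nonpos.2 (abs_nonneg t)))
      (half_pos hc).le
    simp only [g]
    linarith [hcG (φ₀ + c / 2 * t)]
  set φ := fun t => φ₀ + ∫ s in (0 : ℝ)..t, g s
  have hφ (t : ℝ) : HasDerivAt φ (g t) t :=
    ((hgc.integral_hasStrictDerivAt 0 t).hasDerivAt).const_add φ₀
  have hφ_ge {t : ℝ} (ht : 0 ≤ t) : φ₀ + c / 2 * t ≤ φ t := by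
    have := mul_sub_le_image_sub_of_le_deriv (fun s => (hφ s).differentiableAt)
      (fun s => (hφ s).deriv ▸ hg s) ht
    simpa [φ] using this
  have hgL : Tendsto g atTop (𝓝 L) := by
    have harg : Tendsto (fun t => φ₀ + c / 2 * t) atTop atTop :=
      tendsto_atTop_add_const_left _ _ (tendsto_id.const_mul_atTop (half_pos hc))
    have hslack : Tendsto (fun t => c / 2 * exp (-|t|)) atTop (𝓝 0) := by
      simpa using (tendsto_exp_neg_atTop_nhds_zero.comp tendsto_abs_atTop_atTop).const_mul (c / 2)
    simpa using (hGL.comp harg).sub hslack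
  refine ⟨φ, g, by simp [φ], hφ, hgc, fun t => (half_pos hc).trans_le (hg t), fun t ht => ?_,
    tendsto_div_self_of_hasDerivAt hφ hgL⟩
  have hAφ : A ≤ φ t := by nlinarith [hφ_ge ht]
  refine ⟨hAφ, ?_⟩
  calc g t < G (φ₀ + c / 2 * t) := sub_lt_self _ (mul_pos (half_pos hc) (exp_pos _))
    _ ≤ G (φ t) := hGm (hφ_ge ht)
    _ ≤ M (φ t) := hGM _ hAφ

noncomputable def phaseRate (h : ℝ → ℝ) (c₁ c₂ x : ℝ) : ℝ :=
  h (exp (-exp x)) - c₁ * exp (-(x / 2)) - c₂ * exp (-x)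

theorem abs_log_exp_neg_exp (x : ℝ) : |log (exp (-exp x))| = exp x := by
  rw [log_exp, abs_neg, abs_of_pos (exp_pos x)]

theorem exp_mul_phaseRate (h : ℝ → ℝ) (c₁ c₂ x : ℝ) :
    h (exp (-exp x)) * |log (exp (-exp x))| - c₁ * √|log (exp (-exp x))| - c₂ =
      exp x * phaseRate h c₁ c₂ x := by
  have hsqrt : √(exp x) = exp x * exp (-(x / 2)) := by
    rw [← exp_half, ← exp_add]; ring_nf
  have hinv : exp x * exp (-x) = 1 := by rw [← exp_add, add_neg_cancel, exp_zero]
  rw [abs_log_exp_neg_exp, hsqrt, phaseRate]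
  linear_combination c₂ * hinv

theorem tendsto_exp_neg_exp {s₀ : ℝ} (hs₀ : 0 < s₀) :
    Tendsto (fun x => exp (-exp x)) atTop (𝓝[Ioc 0 s₀] 0) := by
  have h0 : Tendsto (fun x => exp (-exp x)) atTop (𝓝 0) :=
    tendsto_exp_atBot.comp (tendsto_neg_atTop_atBot.comp tendsto_exp_atTop)
  refine tendsto_nhdsWithin_iff.2 ⟨h0, ?_⟩
  filter_upwards [h0.eventually (ge_mem_nhds hs₀)] with x hx using ⟨exp_pos _, hx⟩

theorem tendsto_phaseRate {h : ℝ → ℝ} {s₀ l : ℝ} (hs₀ : 0 < s₀)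
    (hlim : Tendsto h (𝓝[Ioc 0 s₀] 0) (𝓝 l)) (c₁ c₂ : ℝ) :
    Tendsto (phaseRate h c₁ c₂) atTop (𝓝 l) := by
  have hdecay (k : ℝ) (hk : 0 < k) : Tendsto (fun x => exp (-(k * x))) atTop (𝓝 0) :=
    tendsto_exp_neg_atTop_nhds_zero.comp (tendsto_id.const_mul_atTop hk)
  have := ((hlim.comp (tendsto_exp_neg_exp hs₀)).sub
    ((hdecay (1 / 2) one_half_pos).const_mul c₁)).sub ((hdecay 1 one_pos).const_mul c₂)
  simp only [mul_zero, sub_zero] at this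
  refine this.congr fun x => ?_
  simp only [phaseRate, Function.comp]
  ring_nf

theorem le_log_neg_log {A ε : ℝ} (hε : ε ∈ Ioc 0 (exp (-exp A))) : A ≤ log (-log ε) := by
  have : exp A ≤ -log ε := by
    have := log_le_log hε.1 hε.2
    rw [log_exp] at this
    linarith
  simpa using log_le_log (exp_pos A) this

theorem exp_neg_exp_log_neg_log {ε : ℝ} (h0 : 0 < ε) (h1 : ε < 1) :
    exp (-exp (log (-log ε))) = ε := by
  rw [exp_log (neg_pos.2 (log_neg h0 h1)), neg_neg, exp_log h0]

theorem one_half_lt_two_div_pi : (1 / 2 : ℝ) < 2 / π := by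
  rw [lt_div_iff₀ pi_pos]
  linarith [pi_lt_four]

theorem statement19_general (s₀ : ℝ) (hs₀ : s₀ ∈ Ioc (0 : ℝ) (Real.exp (-1)))
    (c₁ c₂ : ℝ)
    (h : ℝ → ℝ)
    (hlim : Tendsto h (nhdsWithin 0 (Ioc (0 : ℝ) s₀)) (nhds (2 / π))) :
    ∃ εstar : ℝ, εstar ∈ Ioc (0 : ℝ) s₀ ∧
      ∀ ε₀ : ℝ, ε₀ ∈ Ioc (0 : ℝ) εstar →
        ∃ ε ε' : ℝ → ℝ,
          (∀ t : ℝ, 0 ≤ t → ε t ∈ Ioc (0 : ℝ) s₀) ∧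
          ε 0 = ε₀ ∧
          -- ε is decreasing and continuously differentiable on [0,∞)
          AntitoneOn ε (Ici (0 : ℝ)) ∧
          (∀ t : ℝ, 0 ≤ t → HasDerivWithinAt ε (ε' t) (Ici (0 : ℝ)) t) ∧
          ContinuousOn ε' (Ici (0 : ℝ)) ∧
          -- the differential inequality
          (∀ t : ℝ, 0 ≤ t →
            -((h (ε t) * |Real.log (ε t)| - c₁ * Real.sqrt |Real.log (ε t)| - c₂) * ε t)
              < ε' t) ∧
          -- the asymptotic double-exponential decay rate
          Tendsto (fun t : ℝ => Real.log (-Real.log (ε t)) / t) atTop (nhds (2 / π)) := by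
  have hε := tendsto_exp_neg_exp hs₀.1
  have hM := tendsto_phaseRate hs₀.1 hlim c₁ c₂
  obtain ⟨A, hA⟩ := eventually_atTop.1 <|
    (hM.eventually (lt_mem_nhds one_half_lt_two_div_pi)).and (tendsto_nhdsWithin_iff.1 hε).2
  refine ⟨exp (-exp A), (hA A le_rfl).2, fun ε₀ hε₀ => ?_⟩
  obtain ⟨φ, g, hφ0, hφ, hg, hgpos, hφM, hφL⟩ :=
    exists_phase_lt one_half_pos (fun x hx => (hA x hx).1.le) hM (le_log_neg_log hε₀)
  have hφmono : Monotone φ := monotone_of_deriv_nonneg (fun t => (hφ t).differentiableAt)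
    fun t => (hφ t).deriv ▸ (hgpos t).le
  refine ⟨fun t => exp (-exp (φ t)), fun t => exp (-exp (φ t)) * -(exp (φ t) * g t),
    fun t ht => (hA _ (hφM t ht).1).2, ?_, ?_, fun t _ => (hφ t).exp.neg.exp.hasDerivWithinAt,
    ?_, fun t ht => ?_, ?_⟩
  · have hε₀1 : ε₀ < 1 := hε₀.2.trans_lt (exp_lt_one_iff.2 (neg_lt_zero.2 (exp_pos A)))
    show exp (-exp (φ 0)) = ε₀
    rw [hφ0, exp_neg_exp_log_neg_log hε₀.1 hε₀1]
  · exact (show Antitone fun t => exp (-exp (φ t)) from fun s t hst =>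
      exp_le_exp.2 (neg_le_neg (exp_le_exp.2 (hφmono hst)))).antitoneOn _
  · have hφc : Continuous φ := continuous_iff_continuousAt.2 fun t => (hφ t).continuousAt
    fun_prop
  · rw [exp_mul_phaseRate]
    have := mul_lt_mul_of_pos_right (mul_lt_mul_of_pos_left (hφM t ht).2 (exp_pos (φ t)))
      (exp_pos (-exp (φ t)))
    linarith
  · simpa using hφL

theorem statement19 (s₀ : ℝ) (hs₀ : s₀ ∈ Ioc (0 : ℝ) (Real.exp (-1)))
    (c₁ c₂ : ℝ) (hc₁ : 0 ≤ c₁) (hc₂ : 0 ≤ c₂)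
    (h : ℝ → ℝ) (hcont : ContinuousOn h (Ioc (0 : ℝ) s₀))
    (hlim : Tendsto h (nhdsWithin 0 (Ioc (0 : ℝ) s₀)) (nhds (2 / π))) :
    ∃ εstar : ℝ, εstar ∈ Ioc (0 : ℝ) s₀ ∧
      ∀ ε₀ : ℝ, ε₀ ∈ Ioc (0 : ℝ) εstar →
        ∃ ε ε' : ℝ → ℝ,
          (∀ t : ℝ, 0 ≤ t → ε t ∈ Ioc (0 : ℝ) s₀) ∧
          ε 0 = ε₀ ∧
          -- ε is decreasing and continuously differentiable on [0,∞)
          AntitoneOn ε (Ici (0 : ℝ)) ∧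
          (∀ t : ℝ, 0 ≤ t → HasDerivWithinAt ε (ε' t) (Ici (0 : ℝ)) t) ∧
          ContinuousOn ε' (Ici (0 : ℝ)) ∧
          -- the differential inequality
          (∀ t : ℝ, 0 ≤ t →
            -((h (ε t) * |Real.log (ε t)| - c₁ * Real.sqrt |Real.log (ε t)| - c₂) * ε t)
              < ε' t) ∧
          -- the asymptotic double-exponential decay rate
          Tendsto (fun t : ℝ => Real.log (-Real.log (ε t)) / t) atTop (nhds (2 / π)) :=
  statement19_general s₀ hs₀ c₁ c₂ h hlim
end
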